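/- arXiv:1903.00915 — 8 statements merged into one kernel-verified Lean document; each statement's English description precedes it below -/
import Mathlib

section
/- Let W ∈ B(Y,X) be nonzero and let A ∈ B(X,Y) be Wg-Drazin invertible. Then the system of equations AWBWB = B and AWB = A^{ⓓ,W}WA (in the unknown B ∈ B(X,Y)) is consistent and has the unique solution B = (A^{ⓓ,W}W)²A. -/
open ContinuousLinearMap Filter

variable {X Y : Type*}
  [NormedAddCommGroup X] [InnerProductSpace ℂ X] [CompleteSpace X]
  [NormedAddCommGroup Y] [InnerProductSpace ℂ Y] [CompleteSpace Y]

/-- An operator is quasinilpotent if its spectrum equals `{0}`. -/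
def IsQuasinilpotent (T : X →L[ℂ] X) : Prop := spectrum ℂ T = {0}

/-- `B` is the generalized Drazin inverse of `A`. -/
def IsGDrazinInv (A B : X →L[ℂ] X) : Prop :=
  A * B = B * A ∧ B * A * B = B ∧ IsQuasinilpotent (A - A * A * B)

/-- `B` is the Wg-Drazin inverse of `A` (relative to the weight `W`); quasinilpotence of
`A - AWBWA ∈ B(X,Y)` is taken relative to `W`, i.e. `W(A - AWBWA)` is quasinilpotent. -/
def IsWgDrazinInv (W : Y →L[ℂ] X) (A B : X →L[ℂ] Y) : Prop :=
  A ∘L W ∘L B = B ∘L W ∘L A ∧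
  B ∘L W ∘L A ∘L W ∘L B = B ∧
  IsQuasinilpotent (W ∘L (A - A ∘L W ∘L B ∘L W ∘L A))

/-- `P` is the orthogonal projection of the space onto the subspace `S`. -/
def IsOrthoProjOnto (P : X →L[ℂ] X) (S : Submodule ℂ X) : Prop :=
  P * P = P ∧ ContinuousLinearMap.adjoint P = P ∧ LinearMap.range (P : X →ₗ[ℂ] X) = S

/-- `P` is the idempotent with range `L` and kernel `M` (i.e. `P = P_{L,M}`). -/
def IsIdempotentOnAlong (P : X →L[ℂ] X) (L M : Submodule ℂ X) : Prop :=
  P * P = P ∧ LinearMap.range (P : X →ₗ[ℂ] X) = L ∧ LinearMap.ker (P : X →ₗ[ℂ] X) = M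

/-- Given the generalized Drazin inverse `Ad` of `A`, `B` is the core-EP inverse of `A`:
`AB` is the orthogonal projection onto `R(A^d)` and `R(B) ⊆ R(A^d)`. -/
def IsCoreEPInv (A Ad B : X →L[ℂ] X) : Prop :=
  IsOrthoProjOnto (A * B) (LinearMap.range (Ad : X →ₗ[ℂ] X)) ∧ LinearMap.range (B : X →ₗ[ℂ] X) ≤ LinearMap.range (Ad : X →ₗ[ℂ] X)

/-- Given the generalized Drazin inverses `WAd` of `WA` and `AWd` of `AW`, `B` is the
weighted core-EP inverse of `A`: `WAWB` is the orthogonal projection onto `R((WA)^d)`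
and `R(B) ⊆ R((AW)^d)`. -/
def IsWCoreEPInv (W : Y →L[ℂ] X) (A : X →L[ℂ] Y) (WAd : X →L[ℂ] X) (AWd : Y →L[ℂ] Y)
    (B : X →L[ℂ] Y) : Prop :=
  IsOrthoProjOnto (W ∘L A ∘L W ∘L B) (LinearMap.range (WAd : X →ₗ[ℂ] X)) ∧
  LinearMap.range (B : X →ₗ[ℂ] Y) ≤ LinearMap.range (AWd : Y →ₗ[ℂ] Y)

/-- `B` is the group inverse of `A`. -/
def IsGroupInv (A B : X →L[ℂ] X) : Prop :=
  A * B = B * A ∧ B * A * B = B ∧ A * B * A = A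

/-- `S` is the Moore-Penrose inverse of `T`. -/
def IsMPInv (T : Y →L[ℂ] X) (S : X →L[ℂ] Y) : Prop :=
  T ∘L S ∘L T = T ∧ S ∘L T ∘L S = S ∧
  ContinuousLinearMap.adjoint (T ∘L S) = T ∘L S ∧
  ContinuousLinearMap.adjoint (S ∘L T) = S ∘L T

/-- `C` is the core inverse of `T`: `TC` is the orthogonal projection onto `R(T)`
and `R(C) ⊆ R(T)`. -/
def IsCoreInv (T C : X →L[ℂ] X) : Prop :=
  IsOrthoProjOnto (T * C) (LinearMap.range (T : X →ₗ[ℂ] X)) ∧ LinearMap.range (C : X →ₗ[ℂ] X) ≤ LinearMap.range (T : X →ₗ[ℂ] X)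


lemma quasinil_small (N : X →L[ℂ] X) (hN : IsQuasinilpotent N) {σ ε : ℝ}
    (hσ : 0 < σ) (hε : 0 < ε) : ∃ n : ℕ, ‖N ^ n‖ * σ ^ n < ε := by
  have hrad : spectralRadius ℂ N = 0 := by
    unfold IsQuasinilpotent at hN
    simp [spectralRadius, hN]
  have hg := spectrum.pow_nnnorm_pow_one_div_tendsto_nhds_spectralRadius N
  rw [hrad] at hg
  set ρ : ℝ := min (1 / (2 * σ)) 1 with hρdef
  have hρpos : 0 < ρ := lt_min (by positivity) one_pos
  have hev : ∀ᶠ n : ℕ in atTop,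
      (‖N ^ n‖₊ : ENNReal) ^ (1 / (n : ℝ)) < ENNReal.ofReal ρ :=
    hg.eventually_lt_const (by simp [ENNReal.ofReal_pos, hρpos])
  obtain ⟨n₀, hn₀⟩ := eventually_atTop.mp hev
  obtain ⟨n₁, hn₁⟩ := exists_pow_lt_of_lt_one hε (by norm_num : (1:ℝ)/2 < 1)
  refine ⟨max (max n₀ 1) n₁, ?_⟩
  set n := max (max n₀ 1) n₁ with hndef
  have hn1 : 1 ≤ n := le_trans (le_max_right n₀ 1) (le_max_left _ _)
  have hnn : (n : ℝ) ≠ 0 := by positivity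
  have hlt := hn₀ n (le_trans (le_max_left n₀ 1) (le_max_left _ _))
  -- raise to the n-th power
  have h2 : (‖N ^ n‖₊ : ENNReal) ≤ ENNReal.ofReal (ρ ^ n) := by
    have := ENNReal.rpow_le_rpow hlt.le (by positivity : (0:ℝ) ≤ (n : ℝ))
    rwa [← ENNReal.rpow_mul, one_div, inv_mul_cancel₀ hnn, ENNReal.rpow_one,
      ENNReal.ofReal_rpow_of_pos hρpos, Real.rpow_natCast] at this
  have h3 : ‖N ^ n‖ ≤ ρ ^ n := by
    rw [← enorm_eq_nnnorm, ← ofReal_norm] at h2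
    exact (ENNReal.ofReal_le_ofReal_iff (by positivity)).mp h2
  have h4 : ‖N ^ n‖ * σ ^ n ≤ (ρ * σ) ^ n := by
    rw [mul_pow]
    exact mul_le_mul_of_nonneg_right h3 (by positivity)
  have h5 : ρ * σ ≤ 1 / 2 := by
    have : ρ ≤ 1 / (2 * σ) := min_le_left _ _
    calc ρ * σ ≤ (1 / (2 * σ)) * σ := mul_le_mul_of_nonneg_right this hσ.le
      _ = 1 / 2 := by field_simp
  have h6 : (ρ * σ) ^ n ≤ (1 / 2 : ℝ) ^ n :=
    pow_le_pow_left₀ (by positivity) h5 n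
  have h7 : ((1:ℝ) / 2) ^ n ≤ ((1:ℝ) / 2) ^ n₁ :=
    pow_le_pow_of_le_one (by norm_num) (by norm_num) (le_max_right _ _)
  calc ‖N ^ n‖ * σ ^ n ≤ (ρ * σ) ^ n := h4
    _ ≤ ((1:ℝ)/2) ^ n := h6
    _ ≤ ((1:ℝ)/2) ^ n₁ := h7
    _ < ε := hn₁

lemma helper_mem_range (S Sd : X →L[ℂ] X)
    (hc : S * Sd = Sd * S) (hi : Sd * S * Sd = Sd)
    (hq : IsQuasinilpotent (S - S * S * Sd))
    (x : X) (y : ℕ → X) (hy0 : y 0 = x) (hstep : ∀ n, S (y (n + 1)) = y n)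
    (c σ : ℝ) (hσ : 0 < σ) (hb : ∀ n, ‖y n‖ ≤ c * σ ^ n) :
    x ∈ LinearMap.range (Sd : X →ₗ[ℂ] X) := by
  set p : X →L[ℂ] X := 1 - S * Sd with hpdef
  set N : X →L[ℂ] X := S - S * S * Sd with hNdef
  have hee : (S * Sd) * (S * Sd) = S * Sd := by
    calc (S * Sd) * (S * Sd) = S * (Sd * S * Sd) := by
          simp only [mul_assoc]
      _ = S * Sd := by rw [hi]
  have hp2 : p * p = p := by
    simp only [hpdef, mul_sub, sub_mul, mul_one, one_mul, hee]
    abel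
  have hSp : S * p = p * S := by
    have hc2 : S * (S * Sd) = (S * Sd) * S := by
      calc S * (S * Sd) = S * (Sd * S) := by rw [hc]
        _ = (S * Sd) * S := (mul_assoc S Sd S).symm
    simp only [hpdef, mul_sub, sub_mul, mul_one, one_mul, hc2]
  have hNS : N = S * p := by
    simp only [hNdef, hpdef, mul_sub, mul_one, mul_assoc]
  have hNp : N * p = p * S := by
    rw [hNS, mul_assoc, hp2, hSp]
  have hpow : ∀ n : ℕ, p * S ^ n = N ^ n * p := by
    intro n
    induction n with
    | zero => simp
    | succ n ih =>
      calc p * S ^ (n + 1) = p * S ^ n * S := by rw [pow_succ, mul_assoc]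
        _ = N ^ n * p * S := by rw [ih]
        _ = N ^ n * (p * S) := by rw [mul_assoc]
        _ = N ^ n * (N * p) := by rw [hNp]
        _ = N ^ (n + 1) * p := by rw [pow_succ, mul_assoc]
  have hx : ∀ n : ℕ, (S ^ n) (y n) = x := by
    intro n
    induction n with
    | zero => simpa using hy0
    | succ n ih =>
      rw [pow_succ, ContinuousLinearMap.mul_apply, hstep n, ih]
  -- show p x = 0
  have hc' : 0 ≤ max c 0 := le_max_right _ _
  have hpx : p x = 0 := by
    by_contra hne
    have hpos : 0 < ‖p x‖ := norm_pos_iff.mpr hne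
    set C : ℝ := ‖p‖ * max c 0 + 1 with hCdef
    have hCpos : 0 < C := by positivity
    obtain ⟨n, hn⟩ := quasinil_small N hq hσ (div_pos hpos hCpos)
    have hb' : ‖y n‖ ≤ max c 0 * σ ^ n :=
      le_trans (hb n) (mul_le_mul_of_nonneg_right (le_max_left _ _) (by positivity))
    have key : ‖p x‖ ≤ C * (‖N ^ n‖ * σ ^ n) := by
      have e1 : p x = (N ^ n) (p (y n)) := by
        conv_lhs => rw [← hx n]
        rw [← ContinuousLinearMap.mul_apply, hpow n, ContinuousLinearMap.mul_apply]
      rw [e1]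
      calc ‖(N ^ n) (p (y n))‖ ≤ ‖N ^ n‖ * ‖p (y n)‖ := (N ^ n).le_opNorm _
        _ ≤ ‖N ^ n‖ * (‖p‖ * ‖y n‖) :=
            mul_le_mul_of_nonneg_left (p.le_opNorm _) (norm_nonneg _)
        _ ≤ ‖N ^ n‖ * (‖p‖ * (max c 0 * σ ^ n)) := by
            refine mul_le_mul_of_nonneg_left ?_ (norm_nonneg _)
            exact mul_le_mul_of_nonneg_left hb' (norm_nonneg _)
        _ ≤ C * (‖N ^ n‖ * σ ^ n) := by
            have h1 : ‖p‖ * max c 0 ≤ C := by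
              rw [hCdef]; linarith
            calc ‖N ^ n‖ * (‖p‖ * (max c 0 * σ ^ n))
                = (‖p‖ * max c 0) * (‖N ^ n‖ * σ ^ n) := by ring
              _ ≤ C * (‖N ^ n‖ * σ ^ n) :=
                  mul_le_mul_of_nonneg_right h1 (by positivity)
    have : ‖p x‖ < C * (‖p x‖ / C) :=
      lt_of_le_of_lt key (mul_lt_mul_of_pos_left hn hCpos)
    rw [mul_div_cancel₀ _ hCpos.ne'] at this
    exact lt_irrefl _ this
  -- conclude
  have h0 : x - (S * Sd) x = 0 := by
    have := hpx
    simpa [hpdef, ContinuousLinearMap.sub_apply] using this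
  have h1 : x = (S * Sd) x := sub_eq_zero.mp h0
  have h2 : x = Sd (S x) := by
    conv_lhs => rw [h1, hc]
    rfl
  exact ⟨S x, h2.symm⟩

lemma helper_orbit (S Sd : X →L[ℂ] X)
    (hc : S * Sd = Sd * S) (hi : Sd * S * Sd = Sd)
    (u : X) (hu : u ∈ LinearMap.range (Sd : X →ₗ[ℂ] X)) :
    ∃ y : ℕ → X, y 0 = u ∧ (∀ n, S (y (n + 1)) = y n) ∧
      ∀ n, ‖y n‖ ≤ ‖u‖ * (max ‖Sd‖ 1) ^ n := by
  obtain ⟨v, hv⟩ := hu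
  have hcpt : ∀ w, S (Sd w) = Sd (S w) := fun w => by
    have := DFunLike.congr_fun hc w
    simpa [ContinuousLinearMap.mul_apply] using this
  have hipt : ∀ w, Sd (S (Sd w)) = Sd w := fun w => by
    have := DFunLike.congr_fun hi w
    simpa [ContinuousLinearMap.mul_apply] using this
  have heu : S (Sd u) = u := by
    rw [← hv, ContinuousLinearMap.coe_coe, hcpt, hipt]
  refine ⟨fun n => (Sd ^ n) u, by simp, ?_, ?_⟩
  · intro n
    induction n with
    | zero => simpa using heu
    | succ n ih =>
      have e1 : (Sd ^ (n + 1 + 1)) u = Sd ((Sd ^ (n + 1)) u) := by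
        rw [pow_succ']; rfl
      have e2 : (Sd ^ (n + 1)) u = Sd ((Sd ^ n) u) := by
        rw [pow_succ']; rfl
      show S ((Sd ^ (n + 1 + 1)) u) = (Sd ^ (n + 1)) u
      have ih' : S ((Sd ^ (n + 1)) u) = (Sd ^ n) u := ih
      rw [e1, hcpt, ih', e2]
  · intro n
    induction n with
    | zero => simp
    | succ n ih =>
      have e2 : (Sd ^ (n + 1)) u = Sd ((Sd ^ n) u) := by
        rw [pow_succ']; rfl
      show ‖(Sd ^ (n + 1)) u‖ ≤ ‖u‖ * (max ‖Sd‖ 1) ^ (n + 1)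
      have ih' : ‖(Sd ^ n) u‖ ≤ ‖u‖ * (max ‖Sd‖ 1) ^ n := ih
      rw [e2, pow_succ]
      calc ‖Sd ((Sd ^ n) u)‖ ≤ ‖Sd‖ * ‖(Sd ^ n) u‖ := Sd.le_opNorm _
        _ ≤ (max ‖Sd‖ 1) * (‖u‖ * (max ‖Sd‖ 1) ^ n) := by
            refine mul_le_mul (le_max_left _ _) ih' (norm_nonneg _) ?_
            exact le_trans zero_le_one (le_max_right _ _)
        _ = ‖u‖ * ((max ‖Sd‖ 1) ^ n * max ‖Sd‖ 1) := by ring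

theorem stmt0
    (W : Y →L[ℂ] X) (hW : W ≠ 0)
    (A Adw : X →L[ℂ] Y) (hAdw : IsWgDrazinInv W A Adw)
    (WAd : X →L[ℂ] X) (hWAd : IsGDrazinInv (W ∘L A) WAd)
    (AWd : Y →L[ℂ] Y) (hAWd : IsGDrazinInv (A ∘L W) AWd)
    (Ace : X →L[ℂ] Y) (hAce : IsWCoreEPInv W A WAd AWd Ace) :
    ∀ B : X →L[ℂ] Y,
      (A ∘L W ∘L B ∘L W ∘L B = B ∧ A ∘L W ∘L B = Ace ∘L W ∘L A) ↔
        B = Ace ∘L W ∘L Ace ∘L W ∘L A := by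
  obtain ⟨⟨hQ2, _hQadj, hQr⟩, hAceR⟩ := hAce
  have hAceR' : ∀ x, Ace x ∈ LinearMap.range (AWd : Y →ₗ[ℂ] Y) := fun x => hAceR ⟨x, rfl⟩
  have k1 : ∀ w, A (W (AWd w)) = AWd (A (W w)) := by
    intro w
    have := DFunLike.congr_fun hAWd.1 w
    simpa [ContinuousLinearMap.mul_apply, ContinuousLinearMap.comp_apply] using this
  have k2 : ∀ w, AWd (A (W (AWd w))) = AWd w := by
    intro w
    have := DFunLike.congr_fun hAWd.2.1 w
    simpa [ContinuousLinearMap.mul_apply, ContinuousLinearMap.comp_apply] using this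
  -- W maps range AWd into range WAd
  have hWmaps : ∀ u : Y, u ∈ LinearMap.range (AWd : Y →ₗ[ℂ] Y) → W u ∈ LinearMap.range (WAd : X →ₗ[ℂ] X) := by
    intro u hu
    obtain ⟨y, hy0, hstep, hb⟩ := helper_orbit (A ∘L W) AWd hAWd.1 hAWd.2.1 u hu
    refine helper_mem_range (W ∘L A) WAd hWAd.1 hWAd.2.1 hWAd.2.2 (W u)
      (fun n => W (y n)) (by show W (y 0) = W u; rw [hy0]) ?_ (‖W‖ * ‖u‖) (max ‖AWd‖ 1)
      (lt_of_lt_of_le one_pos (le_max_right _ _)) ?_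
    · intro n
      have h := hstep n
      simp only [ContinuousLinearMap.comp_apply] at h ⊢
      rw [h]
    · intro n
      calc ‖W (y n)‖ ≤ ‖W‖ * ‖y n‖ := W.le_opNorm _
        _ ≤ ‖W‖ * (‖u‖ * (max ‖AWd‖ 1) ^ n) :=
            mul_le_mul_of_nonneg_left (hb n) (norm_nonneg _)
        _ = ‖W‖ * ‖u‖ * (max ‖AWd‖ 1) ^ n := by ring
  -- injectivity of WAW on range AWd
  have hinj : ∀ u : Y, u ∈ LinearMap.range (AWd : Y →ₗ[ℂ] Y) → W (A (W u)) = 0 → u = 0 := by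
    intro u hu h0
    obtain ⟨v, hv⟩ := hu
    rw [ContinuousLinearMap.coe_coe] at hv
    have e1 : u = AWd (A (W u)) := by
      conv_lhs => rw [← hv]
      rw [← k2 v, hv]
    have e2 : u = AWd (AWd (A (W (A (W u))))) := by
      conv_lhs => rw [e1, e1]
      rw [k1]
    rw [h0] at e2
    simpa using e2
  -- Q acts as the identity on range WAd
  have hQpt : ∀ z, (W ∘L A ∘L W ∘L Ace) z = W (A (W (Ace z))) := fun z => by
    simp [ContinuousLinearMap.comp_apply]
  have hQfix : ∀ v : X, v ∈ LinearMap.range (WAd : X →ₗ[ℂ] X) → W (A (W (Ace v))) = v := by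
    intro v hv
    rw [← hQr] at hv
    obtain ⟨z, hz⟩ := hv
    rw [ContinuousLinearMap.coe_coe] at hz
    have h := DFunLike.congr_fun hQ2 z
    rw [ContinuousLinearMap.mul_apply, hz] at h
    rw [← hQpt v]
    exact h
  -- the key identity
  have hkey : ∀ z : X, A (W (Ace (W (Ace z)))) = Ace z := by
    intro z
    have hmem1 : A (W (Ace (W (Ace z)))) ∈ LinearMap.range (AWd : Y →ₗ[ℂ] Y) := by
      obtain ⟨w, hw⟩ := hAceR' (W (Ace z))
      rw [← hw, ContinuousLinearMap.coe_coe, k1]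
      exact ⟨A (W w), rfl⟩
    have hmem : A (W (Ace (W (Ace z)))) - Ace z ∈ LinearMap.range (AWd : Y →ₗ[ℂ] Y) :=
      sub_mem hmem1 (hAceR' z)
    have hfix := hQfix _ (hWmaps _ (hAceR' z))
    have hker : W (A (W (A (W (Ace (W (Ace z)))) - Ace z))) = 0 := by
      rw [map_sub, map_sub, map_sub, hfix, sub_self]
    exact sub_eq_zero.mp (hinj _ hmem hker)
  -- conclusion
  intro B
  constructor
  · rintro ⟨e1, e2⟩
    have e2' : ∀ z, A (W (B z)) = Ace (W (A z)) := fun z => by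
      have := DFunLike.congr_fun e2 z
      simpa [ContinuousLinearMap.comp_apply] using this
    have e1' : ∀ x, A (W (B (W (B x)))) = B x := fun x => by
      have := DFunLike.congr_fun e1 x
      simpa [ContinuousLinearMap.comp_apply] using this
    ext x
    simp only [ContinuousLinearMap.comp_apply]
    calc B x = A (W (B (W (B x)))) := (e1' x).symm
      _ = Ace (W (A (W (B x)))) := e2' _
      _ = Ace (W (Ace (W (A x)))) := by rw [e2' x]
  · intro hB
    subst hB
    constructor
    · ext x
      simp only [ContinuousLinearMap.comp_apply]
      rw [hkey, hkey]
    · ext x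
      simp only [ContinuousLinearMap.comp_apply]
      exact hkey (W (A x))
end

section
/- Let A ∈ B(X) be generalized Drazin invertible. Then the system of equations AB² = B and AB = A^ⓓA (in the unknown B ∈ B(X)) is consistent and has the unique solution B = (A^ⓓ)²A. -/
open ContinuousLinearMap

variable {X Y : Type*}
  [NormedAddCommGroup X] [InnerProductSpace ℂ X] [CompleteSpace X]
  [NormedAddCommGroup Y] [InnerProductSpace ℂ Y] [CompleteSpace Y]

theorem stmt1
    (A Ad : X →L[ℂ] X) (hAd : IsGDrazinInv A Ad)
    (Ace : X →L[ℂ] X) (hAce : IsCoreEPInv A Ad Ace) :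
    ∀ B : X →L[ℂ] X,
      (A * B * B = B ∧ A * B = Ace * A) ↔ B = Ace * Ace * A := by
  obtain ⟨⟨hPP, _, hPrange⟩, hBr⟩ := hAce
  have key : A * Ace * Ace = Ace := by
    ext x
    have hx : Ace x ∈ LinearMap.range (Ad : X →ₗ[ℂ] X) := hBr ⟨x, rfl⟩
    rw [← hPrange] at hx
    obtain ⟨y, hy⟩ := hx
    have h2 : (A * Ace) ((A * Ace) y) = (A * Ace) y := by
      have := congrFun (congrArg DFunLike.coe hPP) y
      simpa using this
    simp only [ContinuousLinearMap.coe_coe, ContinuousLinearMap.mul_apply] at h2 hy ⊢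
    rw [← hy, h2]
  have e1 : A * (Ace * Ace * A) = Ace * A := by
    rw [← mul_assoc, ← mul_assoc, key]
  intro B
  constructor
  · rintro ⟨h1, h2⟩
    have h3 : B = A * B * B := h1.symm
    rw [h2, mul_assoc, h2, ← mul_assoc] at h3
    exact h3
  · rintro rfl
    refine ⟨?_, e1⟩
    rw [e1, mul_assoc, e1, ← mul_assoc]
end

section
/- Let W ∈ B(Y,X) be nonzero and let A ∈ B(X,Y) be Wg-Drazin invertible. Then X = R(WA^{d,W}) ⊕ N(A^{ⓓ,W}WA), and B = (A^{ⓓ,W}W)²A is the unique operator B ∈ B(X,Y) satisfying the two conditions: WAWB = P_{R(WA^{d,W}), N(A^{ⓓ,W}WA)} (the idempotent with range R(WA^{d,W}) and kernel N(A^{ⓓ,W}WA)) and R(B) ⊆ R(A^{d,W}). -/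
open ContinuousLinearMap

variable {X Y : Type*}
  [NormedAddCommGroup X] [InnerProductSpace ℂ X] [CompleteSpace X]
  [NormedAddCommGroup Y] [InnerProductSpace ℂ Y] [CompleteSpace Y]

section AuxLemmas
open Filter


lemma aux_tendsto {𝔸 : Type*} [NormedRing 𝔸] [NormedAlgebra ℂ 𝔸] [CompleteSpace 𝔸]
    (m : 𝔸) (hm : spectrum ℂ m = {0}) (c : ℝ) (hc : 0 ≤ c) :
    Tendsto (fun n : ℕ => ‖m ^ n‖ * c ^ n) atTop (nhds 0) := by
  have hr : spectralRadius ℂ m = 0 := by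
    rw [spectralRadius, hm]; simp
  have hg := spectrum.pow_norm_pow_one_div_tendsto_nhds_spectralRadius m
  rw [hr] at hg
  have hg2 : Tendsto (fun n : ℕ => ‖m ^ n‖ ^ (1 / (n : ℝ))) atTop (nhds 0) := by
    have h := (ENNReal.tendsto_toReal (show (0 : ENNReal) ≠ ⊤ by simp)).comp hg
    simp only [Function.comp, ENNReal.toReal_zero] at h
    exact h.congr fun n => ENNReal.toReal_ofReal (Real.rpow_nonneg (norm_nonneg _) _)
  set ε : ℝ := (2 * (c + 1))⁻¹ with hε
  have hεpos : 0 < ε := by positivity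
  have hεc : 0 ≤ ε * c := by positivity
  have hεc1 : ε * c < 1 := by
    rw [hε, inv_mul_lt_iff₀ (by positivity)]
    nlinarith
  have hsmall : ∀ᶠ n : ℕ in atTop, ‖m ^ n‖ ^ (1 / (n : ℝ)) < ε :=
    hg2.eventually_lt_const hεpos
  refine squeeze_zero' ?_ ?_ (tendsto_pow_atTop_nhds_zero_of_lt_one hεc hεc1)
  · exact Eventually.of_forall fun n => by positivity
  · filter_upwards [hsmall, eventually_ge_atTop 1] with n hn hn1
    have hx : ‖m ^ n‖ = (‖m ^ n‖ ^ (1 / (n : ℝ))) ^ n := by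
      rw [← Real.rpow_natCast (‖m ^ n‖ ^ (1 / (n : ℝ))) n, ← Real.rpow_mul (norm_nonneg _)]
      rw [one_div, inv_mul_cancel₀ (Nat.cast_ne_zero.mpr (by omega)), Real.rpow_one]
    calc ‖m ^ n‖ * c ^ n = (‖m ^ n‖ ^ (1 / (n : ℝ)) * c) ^ n := by rw [mul_pow, ← hx]
    _ ≤ (ε * c) ^ n := by
        apply pow_le_pow_left₀ (by positivity)
        exact mul_le_mul_of_nonneg_right hn.le hc

lemma aux_le_zero {𝔸 : Type*} [NormedRing 𝔸] [NormedAlgebra ℂ 𝔸] [CompleteSpace 𝔸]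
    (m : 𝔸) (hm : spectrum ℂ m = {0}) (c : ℝ) (hc : 0 ≤ c) (r : ℝ)
    (h : ∀ n : ℕ, 1 ≤ n → r ≤ ‖m ^ n‖ * c ^ n) : r ≤ 0 :=
  ge_of_tendsto (aux_tendsto m hm c hc) (eventually_atTop.mpr ⟨1, h⟩)

lemma aux_eq_zero_left (m b x : X →L[ℂ] X) (hm : spectrum ℂ m = {0})
    (h : ∀ n : ℕ, 1 ≤ n → x = m ^ n * b ^ n) : x = 0 := by
  refine norm_le_zero_iff.mp (aux_le_zero m hm ‖b‖ (norm_nonneg _) ‖x‖ fun n hn => ?_)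
  rw [h n hn]
  calc ‖m ^ n * b ^ n‖ ≤ ‖m ^ n‖ * ‖b ^ n‖ := norm_mul_le _ _
  _ ≤ ‖m ^ n‖ * ‖b‖ ^ n := by
      exact mul_le_mul_of_nonneg_left (norm_pow_le' b (by omega)) (norm_nonneg _)

lemma aux_eq_zero_right (m b x : X →L[ℂ] X) (hm : spectrum ℂ m = {0})
    (h : ∀ n : ℕ, 1 ≤ n → x = b ^ n * m ^ n) : x = 0 := by
  refine norm_le_zero_iff.mp (aux_le_zero m hm ‖b‖ (norm_nonneg _) ‖x‖ fun n hn => ?_)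
  rw [h n hn]
  calc ‖b ^ n * m ^ n‖ ≤ ‖b ^ n‖ * ‖m ^ n‖ := norm_mul_le _ _
  _ ≤ ‖m ^ n‖ * ‖b‖ ^ n := by
      rw [mul_comm]
      exact mul_le_mul_of_nonneg_left (norm_pow_le' b (by omega)) (norm_nonneg _)

theorem gdrazin_unique {a b c : X →L[ℂ] X} (hb : IsGDrazinInv a b) (hc : IsGDrazinInv a c) :
    b = c := by
  obtain ⟨hab, hbab, hqb⟩ := hb
  obtain ⟨hac, hcac, hqc⟩ := hc
  have hp : (a*b)*(a*b) = a*b := by rw [mul_assoc a b (a*b), ← mul_assoc b a b, hbab]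
  have hq : (a*c)*(a*c) = a*c := by rw [mul_assoc a c (a*c), ← mul_assoc c a c, hcac]
  -- b^n * a^n = a*b for n ≥ 1
  have hkb' : ∀ n : ℕ, 1 ≤ n → b ^ n * a ^ n = a * b := by
    intro n hn
    induction n with
    | zero => omega
    | succ k ih =>
      rcases Nat.eq_zero_or_pos k with rfl | hk
      · simp [hab]
      · have h0 : b ^ (k+1) * a ^ (k+1) = b * (b^k * a^k) * a := by
          rw [pow_succ' b k, pow_succ a k]; simp [mul_assoc]
        have h3 : b*(a*b)*a = (b*a)*(b*a) := by simp [mul_assoc]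
        rw [h0, ih hk, h3, ← hab, hp, hab]
  -- a^n * c^n = a*c for n ≥ 1
  have hkc : ∀ n : ℕ, 1 ≤ n → a ^ n * c ^ n = a * c := by
    intro n hn
    induction n with
    | zero => omega
    | succ k ih =>
      rcases Nat.eq_zero_or_pos k with rfl | hk
      · simp
      · have h0 : a ^ (k+1) * c ^ (k+1) = a * (a^k * c^k) * c := by
          rw [pow_succ' a k, pow_succ c k]; simp [mul_assoc]
        have h3 : a*(c*a)*c = (a*c)*(a*c) := by simp [mul_assoc]
        rw [h0, ih hk, hac, h3, hq]
        exact hac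
  -- powers of the quasinilpotent parts
  have hca : a*(a*c) = (a*c)*a := by rw [hac, ← mul_assoc, ← hac]
  have hba : a*(a*b) = (a*b)*a := by rw [hab, ← mul_assoc, ← hab]
  have hmc1 : a - a*a*c = a * (1 - a*c) := by rw [mul_sub, mul_one, ← mul_assoc]
  have hmb1 : a - a*a*b = a * (1 - a*b) := by rw [mul_sub, mul_one, ← mul_assoc]
  have hec : (1 - a*c)*(1 - a*c) = 1 - a*c := by
    rw [sub_mul, one_mul, mul_sub, mul_one, hq, sub_self, sub_zero]
  have heb : (1 - a*b)*(1 - a*b) = 1 - a*b := by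
    rw [sub_mul, one_mul, mul_sub, mul_one, hp, sub_self, sub_zero]
  have hcomc : (1 - a*c) * a = a * (1 - a*c) := by
    rw [sub_mul, one_mul, mul_sub, mul_one, hca]
  have hcomb : (1 - a*b) * a = a * (1 - a*b) := by
    rw [sub_mul, one_mul, mul_sub, mul_one, hba]
  have hmcpow : ∀ n : ℕ, 1 ≤ n → (a - a*a*c) ^ n = a ^ n * (1 - a*c) := by
    intro n hn
    induction n with
    | zero => omega
    | succ k ih =>
      rcases Nat.eq_zero_or_pos k with rfl | hk
      · rw [pow_one, pow_one, hmc1]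
      · rw [pow_succ, ih hk, hmc1, pow_succ]
        calc a^k * (1 - a*c) * (a * (1 - a*c)) = a^k * ((1 - a*c) * a) * (1 - a*c) := by
              simp [mul_assoc]
        _ = a^k * a * ((1 - a*c) * (1 - a*c)) := by rw [hcomc]; simp [mul_assoc]
        _ = a^k * a * (1 - a*c) := by rw [hec]
  have hmbpow : ∀ n : ℕ, 1 ≤ n → (a - a*a*b) ^ n = a ^ n * (1 - a*b) := by
    intro n hn
    induction n with
    | zero => omega
    | succ k ih =>
      rcases Nat.eq_zero_or_pos k with rfl | hk
      · rw [pow_one, pow_one, hmb1]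
      · rw [pow_succ, ih hk, hmb1, pow_succ]
        calc a^k * (1 - a*b) * (a * (1 - a*b)) = a^k * ((1 - a*b) * a) * (1 - a*b) := by
              simp [mul_assoc]
        _ = a^k * a * ((1 - a*b) * (1 - a*b)) := by rw [hcomb]; simp [mul_assoc]
        _ = a^k * a * (1 - a*b) := by rw [heb]
  -- key identities
  have key2 : (a*b)*(1 - a*c) = 0 := by
    refine aux_eq_zero_right (a - a*a*c) b _ hqc fun n hn => ?_
    rw [hmcpow n hn, ← hkb' n hn]
    simp [mul_assoc]
  have key3 : (1 - a*b)*(a*c) = 0 := by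
    refine aux_eq_zero_left (a - a*a*b) c _ hqb fun n hn => ?_
    rw [hmbpow n hn, ← hkc n hn]
    have hcombC : Commute (1 - a*b) a := hcomb
    have hcm : (1 - a*b) * a ^ n = a ^ n * (1 - a*b) := (hcombC.pow_right n).eq
    rw [← mul_assoc, hcm, mul_assoc]
  have hpq1 : a*b = (a*b)*(a*c) := by
    have := key2
    rw [mul_sub, mul_one] at this
    exact sub_eq_zero.mp this
  have hpq2 : a*c = (a*b)*(a*c) := by
    have := key3
    rw [sub_mul, one_mul] at this
    exact sub_eq_zero.mp this
  have hpq : a*b = a*c := hpq1.trans hpq2.symm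
  have hb2 : b*(a*b) = b := by rw [← mul_assoc, hbab]
  calc b = b*(a*b) := hb2.symm
  _ = b*(a*c) := by rw [hpq]
  _ = (a*b)*c := by rw [← mul_assoc, ← hab]
  _ = (a*c)*c := by rw [hpq]
  _ = c*(a*c) := by conv_lhs => rw [hac, mul_assoc]
  _ = c := by rw [← mul_assoc, hcac]


lemma qnil_swap [Nontrivial Y] (M : X →L[ℂ] Y) (N : Y →L[ℂ] X)
    (h : IsQuasinilpotent (N ∘L M)) : IsQuasinilpotent (M ∘L N) := by
  have hsub : spectrum ℂ (M ∘L N) ⊆ {0} := by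
    intro l hl
    by_contra hl0
    have hl0' : l ≠ 0 := hl0
    have hnm : l ∉ spectrum ℂ (N ∘L M) := by
      rw [h]; exact hl0
    have hu := spectrum.notMem_iff.mp hnm
    set R : X →L[ℂ] X := ↑hu.unit⁻¹ with hR
    have hR1 : (algebraMap ℂ (X →L[ℂ] X) l - N ∘L M) * R = 1 := by
      exact hu.mul_val_inv
    have hR2 : R * (algebraMap ℂ (X →L[ℂ] X) l - N ∘L M) = 1 := by
      exact hu.val_inv_mul
    have helper1 : (algebraMap ℂ (Y →L[ℂ] Y) l - M ∘L N) * (M ∘L R ∘L N)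
        = M ∘L ((algebraMap ℂ (X →L[ℂ] X) l - N ∘L M) * R) ∘L N := by
      ext y
      simp [Algebra.algebraMap_eq_smul_one, mul_apply, sub_apply, smul_apply, one_apply,
        comp_apply, map_sub, map_smul]
    have helper2 : (M ∘L R ∘L N) * (algebraMap ℂ (Y →L[ℂ] Y) l - M ∘L N)
        = M ∘L (R * (algebraMap ℂ (X →L[ℂ] X) l - N ∘L M)) ∘L N := by
      ext y
      simp [Algebra.algebraMap_eq_smul_one, mul_apply, sub_apply, smul_apply, one_apply,
        comp_apply, map_sub, map_smul]
    have hone : M ∘L (1 : X →L[ℂ] X) ∘L N = M ∘L N := by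
      ext y; simp [comp_apply, one_apply]
    have hbig1 : (algebraMap ℂ (Y →L[ℂ] Y) l - M ∘L N) * (1 + M ∘L R ∘L N)
        = algebraMap ℂ (Y →L[ℂ] Y) l := by
      rw [mul_add, mul_one, helper1, hR1, hone, sub_add_cancel]
    have hbig2 : (1 + M ∘L R ∘L N) * (algebraMap ℂ (Y →L[ℂ] Y) l - M ∘L N)
        = algebraMap ℂ (Y →L[ℂ] Y) l := by
      rw [add_mul, one_mul, helper2, hR2, hone, sub_add_cancel]
    have : IsUnit (algebraMap ℂ (Y →L[ℂ] Y) l - M ∘L N) := by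
      refine isUnit_iff_exists.mpr ⟨l⁻¹ • (1 + M ∘L R ∘L N), ?_, ?_⟩
      · rw [mul_smul_comm, hbig1, Algebra.algebraMap_eq_smul_one, smul_smul,
          inv_mul_cancel₀ hl0', one_smul]
      · rw [smul_mul_assoc, hbig2, Algebra.algebraMap_eq_smul_one, smul_smul,
          inv_mul_cancel₀ hl0', one_smul]
    exact spectrum.notMem_iff.mpr this hl
  have hne : (spectrum ℂ (M ∘L N)).Nonempty := by
    haveI : Nontrivial (Y →L[ℂ] Y) := ⟨1, 0, by
      intro hcontra
      obtain ⟨y, hy⟩ := exists_ne (0 : Y)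
      have := ContinuousLinearMap.ext_iff.mp hcontra y
      simp [one_apply] at this
      exact hy this⟩
    exact spectrum.nonempty _
  obtain ⟨z, hz⟩ := hne
  have hz0 : z = 0 := hsub hz
  refine Set.Subset.antisymm hsub ?_
  intro w hw
  rw [Set.mem_singleton_iff.mp hw, ← hz0]
  exact hz

end AuxLemmas

theorem stmt2
    (W : Y →L[ℂ] X) (hW : W ≠ 0)
    (A Adw : X →L[ℂ] Y) (hAdw : IsWgDrazinInv W A Adw)
    (WAd : X →L[ℂ] X) (hWAd : IsGDrazinInv (W ∘L A) WAd)
    (AWd : Y →L[ℂ] Y) (hAWd : IsGDrazinInv (A ∘L W) AWd)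
    (Ace : X →L[ℂ] Y) (hAce : IsWCoreEPInv W A WAd AWd Ace) :
    IsCompl (LinearMap.range ((W ∘L Adw : X →L[ℂ] X) : X →ₗ[ℂ] X))
      (LinearMap.ker ((Ace ∘L W ∘L A : X →L[ℂ] Y) : X →ₗ[ℂ] Y)) ∧
    ∀ B : X →L[ℂ] Y,
      (IsIdempotentOnAlong (W ∘L A ∘L W ∘L B) (LinearMap.range ((W ∘L Adw : X →L[ℂ] X) : X →ₗ[ℂ] X))
          (LinearMap.ker ((Ace ∘L W ∘L A : X →L[ℂ] Y) : X →ₗ[ℂ] Y)) ∧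
        LinearMap.range (B : X →ₗ[ℂ] Y) ≤ LinearMap.range (Adw : X →ₗ[ℂ] Y)) ↔
        B = Ace ∘L W ∘L Ace ∘L W ∘L A := by
  obtain ⟨hA1op, hA2op, hA3⟩ := hAdw
  have h1 : ∀ x : X, A (W (Adw x)) = Adw (W (A x)) := fun x => by
    have := ContinuousLinearMap.ext_iff.mp hA1op x
    simpa using this
  have h2 : ∀ x : X, Adw (W (A (W (Adw x)))) = Adw x := fun x => by
    have := ContinuousLinearMap.ext_iff.mp hA2op x
    simpa using this
  haveI hY : Nontrivial Y := by
    by_contra hcon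
    apply hW
    have : Subsingleton Y := not_nontrivial_iff_subsingleton.mp hcon
    ext y
    rw [Subsingleton.elim y 0]
    simp
  -- identify WAd and AWd
  have hb : IsGDrazinInv (W ∘L A) (W ∘L Adw) := by
    refine ⟨?_, ?_, ?_⟩
    · ext x
      simp only [ContinuousLinearMap.mul_apply, ContinuousLinearMap.comp_apply]
      rw [h1]
    · ext x
      simp only [ContinuousLinearMap.mul_apply, ContinuousLinearMap.comp_apply]
      rw [h2]
    · have heq : (W ∘L A) - (W ∘L A) * (W ∘L A) * (W ∘L Adw)
          = W ∘L (A - A ∘L W ∘L Adw ∘L W ∘L A) := by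
        ext x
        simp only [ContinuousLinearMap.mul_apply, ContinuousLinearMap.comp_apply,
          ContinuousLinearMap.sub_apply, map_sub]
        rw [h1]
      rw [heq]
      exact hA3
  have hWAdeq : WAd = W ∘L Adw := gdrazin_unique hWAd hb
  have hb' : IsGDrazinInv (A ∘L W) (Adw ∘L W) := by
    refine ⟨?_, ?_, ?_⟩
    · ext y
      simp only [ContinuousLinearMap.mul_apply, ContinuousLinearMap.comp_apply]
      rw [h1]
    · ext y
      simp only [ContinuousLinearMap.mul_apply, ContinuousLinearMap.comp_apply]
      rw [h2]
    · have heq : (A ∘L W) - (A ∘L W) * (A ∘L W) * (Adw ∘L W)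
          = (A - A ∘L W ∘L Adw ∘L W ∘L A) ∘L W := by
        ext y
        simp only [ContinuousLinearMap.mul_apply, ContinuousLinearMap.comp_apply,
          ContinuousLinearMap.sub_apply, map_sub]
        rw [h1]
      rw [heq]
      exact qnil_swap _ W hA3
  have hAWdeq : AWd = Adw ∘L W := gdrazin_unique hAWd hb'
  obtain ⟨⟨hPidem, _hPadj, hPrange⟩, hAcerange⟩ := hAce
  rw [hWAdeq] at hPrange
  rw [hAWdeq] at hAcerange
  -- pointwise facts
  have hPP : ∀ x : X, W (A (W (Ace (W (A (W (Ace x))))))) = W (A (W (Ace x))) := fun x => by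
    have h := ContinuousLinearMap.ext_iff.mp hPidem x
    simpa [ContinuousLinearMap.mul_apply] using h
  have hAceMem : ∀ x : X, ∃ s, Adw (W s) = Ace x := by
    intro x
    obtain ⟨s, hs⟩ := hAcerange ⟨x, rfl⟩
    exact ⟨s, by simpa using hs⟩
  have hRange1 : ∀ z : X, (∃ u, W (Adw u) = z) → W (A (W (Ace z))) = z := by
    intro z hz
    have hzmem : z ∈ LinearMap.range ((W ∘L A ∘L W ∘L Ace : X →L[ℂ] X) : X →ₗ[ℂ] X) := by
      rw [hPrange]
      obtain ⟨u, hu⟩ := hz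
      exact ⟨u, by simpa using hu⟩
    obtain ⟨w, hw⟩ := hzmem
    have hw' : W (A (W (Ace w))) = z := by simpa using hw
    rw [← hw']
    exact hPP w
  have d1 : ∀ u : Y, A (W (Adw (W (Adw (W u))))) = Adw (W u) := fun u =>
    (h1 _).trans (h2 (W u))
  have d1' : ∀ v : Y, (∃ u, Adw (W u) = v) → A (W (Adw (W v))) = v := by
    rintro v ⟨u, rfl⟩
    exact d1 u
  have d4 : ∀ v : Y, (∃ u, Adw (W u) = v) → W (A (W v)) = 0 → v = 0 := by
    intro v hv hz
    rw [← d1' v hv, h1, hz, map_zero]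
  have star1 : ∀ x : X, Ace (W (A (W (Ace x)))) = Ace x := by
    intro x
    have hmem : ∃ u, Adw (W u) = Ace (W (A (W (Ace x)))) - Ace x := by
      obtain ⟨s1, hs1⟩ := hAceMem (W (A (W (Ace x))))
      obtain ⟨s2, hs2⟩ := hAceMem x
      exact ⟨s1 - s2, by rw [map_sub, map_sub, hs1, hs2]⟩
    have hzero : W (A (W (Ace (W (A (W (Ace x)))) - Ace x))) = 0 := by
      rw [map_sub, map_sub, map_sub, hPP x, sub_self]
    exact sub_eq_zero.mp (d4 _ hmem hzero)
  have star2 : ∀ u : Y, Ace (W (A (W (Adw (W u))))) = Adw (W u) := by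
    intro u
    have hmem : ∃ s, Adw (W s) = Ace (W (A (W (Adw (W u))))) - Adw (W u) := by
      obtain ⟨s1, hs1⟩ := hAceMem (W (A (W (Adw (W u)))))
      exact ⟨s1 - u, by rw [map_sub, map_sub, hs1]⟩
    have hz : W (A (W (Ace (W (A (W (Adw (W u)))))))) = W (A (W (Adw (W u)))) :=
      hRange1 _ ⟨W (A (W u)), (congrArg W (h1 (W u))).symm⟩
    have hzero : W (A (W (Ace (W (A (W (Adw (W u))))) - Adw (W u)))) = 0 := by
      rw [map_sub, map_sub, map_sub, hz, sub_self]
    exact sub_eq_zero.mp (d4 _ hmem hzero)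
  have d5 : ∀ x : X, Adw (W (Adw (W (A x)))) = Adw x := by
    intro x
    rw [← h1, h2]
  have star3 : ∀ u : X, Ace (W (A (W (Adw u)))) = Adw u := by
    intro u
    conv_lhs => rw [← d5 u]
    rw [star2]
    exact d5 u
  set Bo : X →L[ℂ] Y := Ace ∘L W ∘L Ace ∘L W ∘L A with hBodef
  have M1 : ∀ x : X, W (A (W (Ace (W (Ace (W (A x))))))) = W (Ace (W (A x))) := by
    intro x
    apply hRange1
    obtain ⟨s, hs⟩ := hAceMem (W (A x))
    exact ⟨W s, congrArg W hs⟩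
  have Piidem : ∀ x : X, W (Ace (W (A (W (Ace (W (A x))))))) = W (Ace (W (A x))) :=
    fun x => congrArg W (star1 (W (A x)))
  have hThetao_apply : ∀ x, (W ∘L A ∘L W ∘L Bo) x = W (Ace (W (A x))) := by
    intro x
    simp only [hBodef, ContinuousLinearMap.comp_apply]
    exact M1 x
  have fact_a : (W ∘L A ∘L W ∘L Bo) * (W ∘L A ∘L W ∘L Bo) = W ∘L A ∘L W ∘L Bo := by
    ext x
    simp only [ContinuousLinearMap.mul_apply]
    rw [hThetao_apply x, hThetao_apply (W (Ace (W (A x))))]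
    exact Piidem x
  have hT2 : ∀ y, (W ∘L A ∘L W ∘L Bo) ((W ∘L A ∘L W ∘L Bo) y) = (W ∘L A ∘L W ∘L Bo) y :=
    fun y => by rw [← ContinuousLinearMap.mul_apply, fact_a]
  have fact_b : LinearMap.range ((W ∘L A ∘L W ∘L Bo : X →L[ℂ] X) : X →ₗ[ℂ] X) = LinearMap.range ((W ∘L Adw : X →L[ℂ] X) : X →ₗ[ℂ] X) := by
    apply le_antisymm
    · rintro _ ⟨x, rfl⟩
      rw [ContinuousLinearMap.coe_coe, hThetao_apply x]
      obtain ⟨s, hs⟩ := hAceMem (W (A x))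
      exact ⟨W s, by simp only [ContinuousLinearMap.coe_coe, ContinuousLinearMap.comp_apply]; exact congrArg W hs⟩
    · rintro _ ⟨u, rfl⟩
      refine ⟨W (Adw u), ?_⟩
      rw [ContinuousLinearMap.coe_coe, hThetao_apply]
      simp only [ContinuousLinearMap.coe_coe, ContinuousLinearMap.comp_apply]
      exact congrArg W (star3 u)
  have fact_c : LinearMap.ker ((W ∘L A ∘L W ∘L Bo : X →L[ℂ] X) : X →ₗ[ℂ] X) = LinearMap.ker ((Ace ∘L W ∘L A : X →L[ℂ] Y) : X →ₗ[ℂ] Y) := by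
    ext x
    simp only [LinearMap.mem_ker]
    constructor
    · intro hx
      rw [ContinuousLinearMap.coe_coe, hThetao_apply x] at hx
      have hker : W (A (W (Ace (W (A x))))) = 0 := by rw [hx, map_zero, map_zero]
      have := d4 _ (hAceMem (W (A x))) hker
      simp only [ContinuousLinearMap.coe_coe, ContinuousLinearMap.comp_apply]
      exact this
    · intro hx
      have hx' : Ace (W (A x)) = 0 := by simpa using hx
      rw [ContinuousLinearMap.coe_coe, hThetao_apply x, hx', map_zero]
  have fact_d : LinearMap.range (Bo : X →ₗ[ℂ] Y) ≤ LinearMap.range (Adw : X →ₗ[ℂ] Y) := by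
    rintro _ ⟨x, rfl⟩
    simp only [hBodef, ContinuousLinearMap.comp_apply]
    obtain ⟨s, hs⟩ := hAceMem (W (Ace (W (A x))))
    exact ⟨W s, hs⟩
  constructor
  · -- IsCompl
    rw [← fact_b, ← fact_c]
    constructor
    · apply Submodule.disjoint_def.mpr
      intro x hx1 hx2
      obtain ⟨y, hy⟩ := hx1
      have hker := LinearMap.mem_ker.mp hx2
      rw [← hy] at hker
      rw [ContinuousLinearMap.coe_coe, hT2 y] at hker
      rw [← hy]
      exact hker
    · apply codisjoint_iff_le_sup.mpr
      intro x _
      refine Submodule.mem_sup.mpr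
        ⟨(W ∘L A ∘L W ∘L Bo) x, ⟨x, rfl⟩, x - (W ∘L A ∘L W ∘L Bo) x, ?_, by abel⟩
      refine LinearMap.mem_ker.mpr ?_
      rw [map_sub, ContinuousLinearMap.coe_coe, hT2 x, sub_self]
  · intro B
    constructor
    · rintro ⟨⟨hBidem, hBrange, hBker⟩, hBr⟩
      have hTB : ∀ x, (W ∘L A ∘L W ∘L B) ((W ∘L A ∘L W ∘L B) x) = (W ∘L A ∘L W ∘L B) x :=
        fun x => by rw [← ContinuousLinearMap.mul_apply, hBidem]
      have hPiId : ∀ z : X, (∃ u, W (Adw u) = z) → W (Ace (W (A z))) = z := by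
        rintro z ⟨u, rfl⟩
        exact congrArg W (star3 u)
      have hTheta : ∀ x, W (A (W (B x))) = W (Ace (W (A x))) := by
        intro x
        have hmem : (W ∘L A ∘L W ∘L B) x ∈ LinearMap.range ((W ∘L Adw : X →L[ℂ] X) : X →ₗ[ℂ] X) := by
          rw [← hBrange]
          exact ⟨x, rfl⟩
        obtain ⟨u, hu⟩ := hmem
        have hu' : W (Adw u) = W (A (W (B x))) := by simpa using hu
        have e1 : W (Ace (W (A (W (A (W (B x))))))) = W (A (W (B x))) := hPiId _ ⟨u, hu'⟩
        have hker : (W ∘L A ∘L W ∘L B) (x - (W ∘L A ∘L W ∘L B) x) = 0 := by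
          rw [map_sub, hTB x, sub_self]
        have hkerF : (Ace ∘L W ∘L A) (x - (W ∘L A ∘L W ∘L B) x) = 0 := by
          have hxmem : x - (W ∘L A ∘L W ∘L B) x ∈ LinearMap.ker ((Ace ∘L W ∘L A : X →L[ℂ] Y) : X →ₗ[ℂ] Y) := by
            rw [← hBker]
            exact LinearMap.mem_ker.mpr hker
          exact LinearMap.mem_ker.mp hxmem
        have hkerF' : Ace (W (A (x - W (A (W (B x)))))) = 0 := by
          simpa using hkerF
        have e2 : Ace (W (A x)) - Ace (W (A (W (A (W (B x)))))) = 0 := by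
          rw [← map_sub, ← map_sub, ← map_sub]
          exact hkerF'
        have e3 : Ace (W (A x)) = Ace (W (A (W (A (W (B x)))))) := sub_eq_zero.mp e2
        rw [e3]
        exact e1.symm
      ext x
      have hmemB : ∃ s, Adw (W s) = B x - Ace (W (Ace (W (A x)))) := by
        obtain ⟨t, ht⟩ := hBr ⟨x, rfl⟩
        obtain ⟨s2, hs2⟩ := hAceMem (W (Ace (W (A x))))
        refine ⟨A (W (Adw t)) - s2, ?_⟩
        rw [map_sub, map_sub, hs2, h2 t, ← ContinuousLinearMap.coe_coe Adw, ht, ContinuousLinearMap.coe_coe]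
      have hzB : W (A (W (B x - Ace (W (Ace (W (A x))))))) = 0 := by
        rw [map_sub, map_sub, map_sub, hTheta x, M1 x, sub_self]
      have hfin := sub_eq_zero.mp (d4 _ hmemB hzB)
      simpa [hBodef, ContinuousLinearMap.comp_apply] using hfin
    · rintro rfl
      exact ⟨⟨fact_a, fact_b, fact_c⟩, fact_d⟩
end

section
/- Let A ∈ B(X) be generalized Drazin invertible. Then: (i) AA^⊗ is an idempotent with range R(A^d) and kernel N(A^ⓓA); (ii) A^⊗A is an idempotent with range R(A^d) and kernel N(A^ⓓA²); (iii) A^⊗AA^⊗ = A^⊗, R(A^⊗) = R(A^d) and N(A^⊗) = N(A^ⓓA) (so A^⊗ is the outer inverse of A with range R(A^d) and kernel N(A^ⓓA)). -/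
open ContinuousLinearMap

variable {X Y : Type*}
  [NormedAddCommGroup X] [InnerProductSpace ℂ X] [CompleteSpace X]
  [NormedAddCommGroup Y] [InnerProductSpace ℂ Y] [CompleteSpace Y]

theorem stmt6
    (A Ad : X →L[ℂ] X) (hAd : IsGDrazinInv A Ad)
    (Ace : X →L[ℂ] X) (hAce : IsCoreEPInv A Ad Ace)
    (Aot : X →L[ℂ] X) (hAot : Aot = Ace * Ace * A) :
    IsIdempotentOnAlong (A * Aot) (LinearMap.range (Ad : X →ₗ[ℂ] X)) (LinearMap.ker (Ace * A : X →ₗ[ℂ] X)) ∧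
    IsIdempotentOnAlong (Aot * A) (LinearMap.range (Ad : X →ₗ[ℂ] X)) (LinearMap.ker (Ace * A * A : X →ₗ[ℂ] X)) ∧
    (Aot * A * Aot = Aot ∧
      LinearMap.range (Aot : X →ₗ[ℂ] X) = LinearMap.range (Ad : X →ₗ[ℂ] X) ∧
      LinearMap.ker (Aot : X →ₗ[ℂ] X) = LinearMap.ker (Ace * A : X →ₗ[ℂ] X)) := by
  obtain ⟨hc, hdad, -⟩ := hAd
  obtain ⟨⟨hPP, -, hPr⟩, hrange⟩ := hAce
  -- pointwise facts
  have memAce : ∀ x, Ace x ∈ LinearMap.range (Ad : X →ₗ[ℂ] X) := fun x => hrange ⟨x, rfl⟩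
  have memAd : ∀ x, Ad x ∈ LinearMap.range (Ad : X →ₗ[ℂ] X) := fun x => ⟨x, rfl⟩
  have hc' : ∀ x, A (Ad x) = Ad (A x) := fun x => by
    have := congrArg (fun f : X →L[ℂ] X => f x) hc
    simpa [ContinuousLinearMap.mul_apply] using this
  have hdad' : ∀ x, Ad (A (Ad x)) = Ad x := fun x => by
    have := congrArg (fun f : X →L[ℂ] X => f x) hdad
    simpa [ContinuousLinearMap.mul_apply] using this
  have hPP' : ∀ x, A (Ace (A (Ace x))) = A (Ace x) := fun x => by
    have := congrArg (fun f : X →L[ℂ] X => f x) hPP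
    simpa [ContinuousLinearMap.mul_apply] using this
  -- P = A * Ace is the identity on R(Ad)
  have idOn : ∀ x ∈ LinearMap.range (Ad : X →ₗ[ℂ] X), A (Ace x) = x := by
    intro x hx
    rw [← hPr] at hx
    obtain ⟨y, hy⟩ := hx
    have hy' : A (Ace y) = x := by simpa [ContinuousLinearMap.mul_apply] using hy
    rw [← hy', hPP']
  -- A is injective on R(Ad)
  have inj : ∀ x ∈ LinearMap.range (Ad : X →ₗ[ℂ] X), A x = 0 → x = 0 := by
    intro x hx h0
    obtain ⟨y, rfl⟩ := hx
    have := hdad' y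
    rw [ContinuousLinearMap.coe_coe] at h0; rw [h0] at this
    simpa using this.symm
  have memP : ∀ x, A (Ace x) ∈ LinearMap.range (Ad : X →ₗ[ℂ] X) := by
    intro x
    rw [← hPr]
    exact ⟨x, by simp [ContinuousLinearMap.mul_apply]⟩
  have h1' : ∀ x, A (Ace (Ace x)) = Ace x := fun x => idOn (Ace x) (memAce x)
  have h2' : ∀ x, Ace (A (Ace x)) = Ace x := by
    intro x
    have hmem : Ace (A (Ace x)) - Ace x ∈ LinearMap.range (Ad : X →ₗ[ℂ] X) :=
      Submodule.sub_mem _ (memAce _) (memAce _)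
    have hA : A (Ace (A (Ace x)) - Ace x) = 0 := by
      rw [map_sub, idOn (A (Ace x)) (memP x), sub_self]
    have := inj _ hmem hA
    exact sub_eq_zero.mp this
  have h3' : ∀ x, Ace (A (Ad x)) = Ad x := by
    intro x
    have hmemAAd : A (Ad x) ∈ LinearMap.range (Ad : X →ₗ[ℂ] X) := by rw [hc']; exact ⟨A x, rfl⟩
    have hmem : Ace (A (Ad x)) - Ad x ∈ LinearMap.range (Ad : X →ₗ[ℂ] X) :=
      Submodule.sub_mem _ (memAce _) (memAd _)
    have hA : A (Ace (A (Ad x)) - Ad x) = 0 := by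
      rw [map_sub, idOn (A (Ad x)) hmemAAd, sub_self]
    exact sub_eq_zero.mp (inj _ hmem hA)
  have hkey : ∀ x, Ace (Ace (A (A (Ad x)))) = Ad x := by
    intro x
    rw [hc', h3', ← hc', h3']
  have hAot' : ∀ x, Aot x = Ace (Ace (A x)) := fun x => by
    simp [hAot, ContinuousLinearMap.mul_apply]
  refine ⟨⟨?_, ?_, ?_⟩, ⟨?_, ?_, ?_⟩, ?_, ?_, ?_⟩
  · ext x
    simp only [ContinuousLinearMap.mul_apply, hAot']
    simp only [h1', h2']
  · apply le_antisymm
    · rintro x ⟨y, rfl⟩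
      simp only [ContinuousLinearMap.coe_coe, ContinuousLinearMap.mul_apply, hAot']
      rw [h1']
      exact memAce _
    · rintro x ⟨y, rfl⟩
      exact ⟨Ad y, by simp only [ContinuousLinearMap.coe_coe, ContinuousLinearMap.mul_apply, hAot']; rw [h1', h3']⟩
  · ext x
    simp only [LinearMap.mem_ker, Module.End.mul_apply, ContinuousLinearMap.coe_coe, ContinuousLinearMap.mul_apply, hAot']
    rw [h1']
  · ext x
    simp only [ContinuousLinearMap.mul_apply, hAot']
    simp only [h1', h2']
  · apply le_antisymm
    · rintro x ⟨y, rfl⟩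
      simp only [ContinuousLinearMap.coe_coe, ContinuousLinearMap.mul_apply, hAot']
      exact memAce _
    · rintro x ⟨y, rfl⟩
      exact ⟨Ad y, by simp only [ContinuousLinearMap.coe_coe, ContinuousLinearMap.mul_apply, hAot']; rw [hkey]⟩
  · ext x
    simp only [LinearMap.mem_ker, Module.End.mul_apply, ContinuousLinearMap.coe_coe, ContinuousLinearMap.mul_apply, hAot']
    constructor
    · intro h
      have : A (Ace (Ace (A (A x)))) = 0 := by rw [h, map_zero]
      rwa [h1'] at this
    · intro h
      rw [h, map_zero]
  · ext x
    simp only [ContinuousLinearMap.mul_apply, hAot']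
    simp only [h1', h2']
  · apply le_antisymm
    · rintro x ⟨y, rfl⟩
      simp only [ContinuousLinearMap.coe_coe]; rw [hAot']
      exact memAce _
    · rintro x ⟨y, rfl⟩
      exact ⟨A (Ad y), by simp only [ContinuousLinearMap.coe_coe]; rw [hAot', hkey]⟩
  · ext x
    simp only [LinearMap.mem_ker, Module.End.mul_apply, ContinuousLinearMap.coe_coe, ContinuousLinearMap.mul_apply, hAot']
    constructor
    · intro h
      have : A (Ace (Ace (A x))) = 0 := by rw [h, map_zero]
      rwa [h1'] at this
    · intro h
      rw [h, map_zero]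
end

section
/- Let W ∈ B(Y,X) be nonzero and let A ∈ B(X,Y) be Wg-Drazin invertible. Then, for B ∈ B(X,Y), the following statements are equivalent: (i) B = A^{⊗,W}; (ii) A^{ⓓ,W}WAWB = B and AWB = A^{ⓓ,W}WA; (iii) BWAWB = B, AWB = A^{ⓓ,W}WA and BWA^{ⓓ,W} = A^{ⓓ,W}WA^{ⓓ,W}; (iv) BWAWB = B, AWB = A^{ⓓ,W}WA and BWA^{d,W} = A^{d,W}WA^{d,W}. -/
open ContinuousLinearMap

variable {X Y : Type*}
  [NormedAddCommGroup X] [InnerProductSpace ℂ X] [CompleteSpace X]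
  [NormedAddCommGroup Y] [InnerProductSpace ℂ Y] [CompleteSpace Y]

/-! ### Auxiliary lemmas -/

open Filter in
private lemma eq_zero_of_quasinil_bound {T z : X →L[ℂ] X} (hT : IsQuasinilpotent T)
    (c M : ℝ) (hc : 0 ≤ c) (hM : 0 ≤ M)
    (h : ∀ n : ℕ, 1 ≤ n → ‖z‖ ≤ c * M ^ n * ‖T ^ n‖) : z = 0 := by
  by_contra hz
  have hz' : 0 < ‖z‖ := norm_pos_iff.mpr hz
  have hT' : spectrum ℂ T = {0} := hT
  have hr : spectralRadius ℂ T = 0 := by simp [spectralRadius, hT']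
  have gel := spectrum.pow_nnnorm_pow_one_div_tendsto_nhds_spectralRadius T
  rw [hr] at gel
  set δ : ℝ := (2 * (M + 1))⁻¹ with hδdef
  have hδpos : 0 < δ := by positivity
  have hMδ : M * δ ≤ 1 / 2 := by
    rw [hδdef, ← div_eq_mul_inv, div_le_div_iff₀ (by positivity) (by norm_num)]
    nlinarith
  have hev : ∀ᶠ n : ℕ in atTop, (‖T ^ n‖₊ : ENNReal) ^ (1 / (n : ℝ)) < ENNReal.ofReal δ :=
    gel.eventually_lt_const (by simpa using ENNReal.ofReal_pos.mpr hδpos)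
  have hev2 : ∀ᶠ n : ℕ in atTop, c * (1 / 2 : ℝ) ^ n < ‖z‖ := by
    have ht : Filter.Tendsto (fun n : ℕ => c * (1 / 2 : ℝ) ^ n) atTop (nhds 0) := by
      simpa using (tendsto_pow_atTop_nhds_zero_of_lt_one (r := (1/2 : ℝ))
        (by norm_num) (by norm_num)).const_mul c
    exact ht.eventually_lt_const hz'
  obtain ⟨n, hn⟩ := ((hev.and hev2).and (eventually_ge_atTop 1)).exists
  obtain ⟨⟨hn1, hn2⟩, hn3⟩ := hn
  have hnne : (n : ℝ) ≠ 0 := by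
    exact_mod_cast Nat.one_le_iff_ne_zero.mp hn3
  have hTn : ‖T ^ n‖ ≤ δ ^ n := by
    have h1 := ENNReal.rpow_le_rpow hn1.le (Nat.cast_nonneg (α := ℝ) n)
    rw [← ENNReal.rpow_mul, one_div, inv_mul_cancel₀ hnne, ENNReal.rpow_one] at h1
    rw [ENNReal.ofReal_rpow_of_pos hδpos, Real.rpow_natCast] at h1
    rw [show ((‖T ^ n‖₊ : ENNReal)) = ENNReal.ofReal ‖T ^ n‖ from (ofReal_norm _).symm] at h1
    exact (ENNReal.ofReal_le_ofReal_iff (by positivity)).mp h1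
  have hfin : ‖z‖ < ‖z‖ := by
    calc ‖z‖ ≤ c * M ^ n * ‖T ^ n‖ := h n hn3
    _ ≤ c * M ^ n * δ ^ n :=
        mul_le_mul_of_nonneg_left hTn (by positivity)
    _ = c * (M * δ) ^ n := by rw [mul_pow, mul_assoc]
    _ ≤ c * (1/2) ^ n :=
        mul_le_mul_of_nonneg_left (pow_le_pow_left₀ (by positivity) hMδ n) hc
    _ < ‖z‖ := hn2
  exact absurd hfin (lt_irrefl _)

private lemma isUnit_comp_swap {u : X →L[ℂ] Y} {v : Y →L[ℂ] X} {l : ℂ} (hl : l ≠ 0)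
    (h : IsUnit (algebraMap ℂ (X →L[ℂ] X) l - v ∘L u)) :
    IsUnit (algebraMap ℂ (Y →L[ℂ] Y) l - u ∘L v) := by
  obtain ⟨w, hw1, hw2⟩ := isUnit_iff_exists.mp h
  have hw1' : ∀ x : X, l • w x - v (u (w x)) = x := by
    intro x
    have h0 := congrArg (fun f => f x) hw1
    simpa only [mul_apply_eq_comp, sub_apply, smul_apply, one_apply_eq_self, comp_apply,
      Algebra.algebraMap_eq_smul_one] using h0
  have hw2' : ∀ x : X, l • w x - w (v (u x)) = x := by
    intro x
    have h0 := congrArg (fun f => f x) hw2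
    simp only [mul_apply_eq_comp, sub_apply, smul_apply, one_apply_eq_self, comp_apply,
      Algebra.algebraMap_eq_smul_one] at h0
    rw [map_sub, map_smul] at h0
    exact h0
  refine isUnit_iff_exists.mpr ⟨l⁻¹ • (1 + u ∘L w ∘L v), ?_, ?_⟩
  · refine ContinuousLinearMap.ext fun y => ?_
    simp only [mul_apply_eq_comp, smul_apply, add_apply, one_apply_eq_self, comp_apply, sub_apply,
      Algebra.algebraMap_eq_smul_one]
    have h1 : v (u (w (v y))) = l • w (v y) - v y := by
      have h0 := hw1' (v y)
      linear_combination (norm := module) - h0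
    have hvz : v (l⁻¹ • (y + u (w (v y)))) = w (v y) := by
      rw [map_smul, map_add, h1]
      match_scalars <;> field_simp <;> ring
    rw [hvz]
    match_scalars <;> field_simp <;> ring
  · refine ContinuousLinearMap.ext fun y => ?_
    simp only [mul_apply_eq_comp, smul_apply, add_apply, one_apply_eq_self, comp_apply, sub_apply,
      Algebra.algebraMap_eq_smul_one]
    have h2 : v (l • y - u (v y)) = l • v y - v (u (v y)) := by
      rw [map_sub, map_smul]
    have h3 : w (l • v y - v (u (v y))) = v y := by
      rw [map_sub, map_smul]; exact hw2' (v y)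
    rw [h2, h3]
    match_scalars <;> field_simp <;> ring

private lemma quasinil_comp_swap [Nontrivial Y] {u : X →L[ℂ] Y} {v : Y →L[ℂ] X}
    (h : IsQuasinilpotent (v ∘L u)) : IsQuasinilpotent (u ∘L v) := by
  haveI : Nontrivial (Y →L[ℂ] Y) := by
    obtain ⟨y₀, hy₀⟩ := exists_ne (0 : Y)
    refine ⟨1, 0, fun hc => hy₀ ?_⟩
    have := congrArg (fun f => f y₀) hc
    simpa using this
  have hne := spectrum.nonempty (u ∘L v)
  have hsub : spectrum ℂ (u ∘L v) ⊆ {0} := by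
    intro l hl
    by_contra hl0
    have hl0' : l ≠ 0 := hl0
    have hvu : l ∉ spectrum ℂ (v ∘L u) := by
      rw [show spectrum ℂ (v ∘L u) = {0} from h]
      exact hl0
    exact (spectrum.mem_iff.mp hl) (isUnit_comp_swap hl0' (spectrum.notMem_iff.mp hvu))
  show spectrum ℂ (u ∘L v) = {0}
  rcases Set.subset_singleton_iff_eq.mp hsub with h0 | h0
  · exact absurd h0 hne.ne_empty
  · exact h0

private lemma pow_mul_idem {a p : X →L[ℂ] X} (hpa : a * p = p * a) (hp : p * p = p) :
    ∀ n : ℕ, (a * p) ^ (n + 1) = a ^ (n + 1) * p := by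
  intro n
  induction n with
  | zero => simp
  | succ n ih =>
    calc (a*p)^(n+1+1) = (a*p)^(n+1) * (a*p) := pow_succ _ _
    _ = a^(n+1) * p * (a*p) := by rw [ih]
    _ = a^(n+1) * (p * a * p) := by rw [mul_assoc, ← mul_assoc p a p]
    _ = a^(n+1) * (a * p * p) := by rw [← hpa]
    _ = a^(n+1) * (a * p) := by rw [mul_assoc a p p, hp]
    _ = a^(n+1+1) * p := by rw [pow_succ a (n+1), mul_assoc]

private lemma gdrazin_aux1 {a p q r : X →L[ℂ] X}
    (hpa : a * p = p * a) (hp2 : p * p = p) (hTp : IsQuasinilpotent (a * p))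
    (hqa : a * q = q * a) (hq2 : q * q = q)
    (hu : (a + q) * r = 1) (hr : r * (a + q) = 1) :
    p * (1 - q) = 0 ∧ (1 - q) * p = 0 := by
  have hexp : (1 - q) * (a + q) = a * (1 - q) := by
    simp only [sub_mul, mul_sub, mul_add, one_mul, mul_one, hq2]
    rw [hqa]; abel
  have hexp' : (a + q) * (1 - q) = a * (1 - q) := by
    simp only [add_mul, mul_sub, mul_one, hq2]
    abel
  have hcom : a * (a + q) = (a + q) * a := by
    simp only [mul_add, add_mul]; rw [hqa]
  have hra : r * a = a * r := by
    calc r*a = r*a*((a+q)*r) := by rw [hu, mul_one]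
    _ = r*(a*(a+q))*r := by simp only [mul_assoc]
    _ = r*((a+q)*a)*r := by rw [hcom]
    _ = (r*(a+q))*(a*r) := by simp only [mul_assoc]
    _ = a*r := by rw [hr, one_mul]
  have hcap : Commute a p := hpa
  have hcaq : Commute a (1 - q) := ((Commute.one_right a).sub_right hqa)
  have hcar : Commute (a : X →L[ℂ] X) r := hra.symm
  have hrq : r * q = q * r := by
    have e1 : q = (a + q) - a := by rw [add_sub_cancel_left]
    calc r * q = r * ((a + q) - a) := by rw [← e1]
    _ = r * (a + q) - r * a := by rw [mul_sub]
    _ = 1 - a * r := by rw [hr, hra]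
    _ = (a + q) * r - a * r := by rw [hu]
    _ = ((a + q) - a) * r := by rw [sub_mul]
    _ = q * r := by rw [← e1]
  have hcrq : Commute r (1 - q) := (Commute.one_right r).sub_right hrq
  have step0 : (1 - q) = a * (1 - q) * r := by
    calc (1 - q) = (1 - q) * ((a + q) * r) := by rw [hu, mul_one]
    _ = ((1 - q) * (a + q)) * r := by rw [mul_assoc]
    _ = a * (1 - q) * r := by rw [hexp]
  have step0' : (1 - q) = r * (a * (1 - q)) := by
    calc (1 - q) = (r * (a + q)) * (1 - q) := by rw [hr, one_mul]
    _ = r * ((a + q) * (1 - q)) := by rw [mul_assoc]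
    _ = r * (a * (1 - q)) := by rw [hexp']
  have key : ∀ n : ℕ, (1 - q) = a ^ (n+1) * (1 - q) * r ^ (n+1) := by
    intro n
    induction n with
    | zero => simpa using step0
    | succ n ih =>
      calc (1 - q) = a ^ (n+1) * (1 - q) * r ^ (n+1) := ih
      _ = a ^ (n+1) * (a * (1 - q) * r) * r ^ (n+1) := by conv_lhs => rw [step0]
      _ = a ^ (n+1+1) * (1 - q) * r ^ (n+1+1) := by
          rw [pow_succ a (n+1), pow_succ' r (n+1)]
          simp only [mul_assoc]
  have key' : ∀ n : ℕ, (1 - q) = r ^ (n+1) * (a ^ (n+1) * (1 - q)) := by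
    intro n
    calc (1 - q) = a ^ (n+1) * (1 - q) * r ^ (n+1) := key n
    _ = a ^ (n+1) * r ^ (n+1) * (1 - q) := by
        rw [mul_assoc, (hcrq.symm.pow_right (n+1)).eq, ← mul_assoc]
    _ = r ^ (n+1) * (a ^ (n+1) * (1 - q)) := by
        rw [(hcar.pow_pow (n+1) (n+1)).eq, mul_assoc]
  have hA : ∀ n : ℕ, p * (1 - q) = (a*p) ^ (n+1) * ((1 - q) * r ^ (n+1)) := by
    intro n
    calc p * (1 - q) = p * (a ^ (n+1) * (1 - q) * r ^ (n+1)) := by conv_lhs => rw [key n]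
    _ = (p * a ^ (n+1)) * ((1 - q) * r ^ (n+1)) := by simp only [mul_assoc]
    _ = (a ^ (n+1) * p) * ((1 - q) * r ^ (n+1)) := by rw [(hcap.pow_left (n+1)).eq]
    _ = (a*p) ^ (n+1) * ((1 - q) * r ^ (n+1)) := by rw [pow_mul_idem hpa hp2 n]
  have hB : ∀ n : ℕ, (1 - q) * p = r ^ (n+1) * ((1 - q) * (a*p) ^ (n+1)) := by
    intro n
    calc (1 - q) * p = (r ^ (n+1) * (a ^ (n+1) * (1 - q))) * p := by conv_lhs => rw [key' n]
    _ = r ^ (n+1) * (a ^ (n+1) * (1 - q) * p) := by simp only [mul_assoc]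
    _ = r ^ (n+1) * ((1 - q) * a ^ (n+1) * p) := by rw [(hcaq.pow_left (n+1)).eq]
    _ = r ^ (n+1) * ((1 - q) * (a ^ (n+1) * p)) := by simp only [mul_assoc]
    _ = r ^ (n+1) * ((1 - q) * (a*p) ^ (n+1)) := by rw [pow_mul_idem hpa hp2 n]
  constructor
  · refine eq_zero_of_quasinil_bound hTp ‖(1:X →L[ℂ] X) - q‖ ‖r‖ (norm_nonneg _) (norm_nonneg _) ?_
    intro n hn
    obtain ⟨m, rfl⟩ : ∃ m, n = m + 1 := ⟨n - 1, by omega⟩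
    calc ‖p * (1 - q)‖ = ‖(a*p) ^ (m+1) * ((1 - q) * r ^ (m+1))‖ := by rw [hA m]
    _ ≤ ‖(a*p) ^ (m+1)‖ * ‖(1 - q) * r ^ (m+1)‖ := norm_mul_le _ _
    _ ≤ ‖(a*p) ^ (m+1)‖ * (‖(1:X →L[ℂ] X) - q‖ * ‖r‖ ^ (m+1)) := by
        refine mul_le_mul_of_nonneg_left ?_ (norm_nonneg _)
        exact (norm_mul_le _ _).trans
          (mul_le_mul_of_nonneg_left (norm_pow_le' r (Nat.succ_pos m)) (norm_nonneg _))
    _ = ‖(1:X →L[ℂ] X) - q‖ * ‖r‖ ^ (m+1) * ‖(a*p) ^ (m+1)‖ := by ring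
  · refine eq_zero_of_quasinil_bound hTp ‖(1:X →L[ℂ] X) - q‖ ‖r‖ (norm_nonneg _) (norm_nonneg _) ?_
    intro n hn
    obtain ⟨m, rfl⟩ : ∃ m, n = m + 1 := ⟨n - 1, by omega⟩
    calc ‖(1 - q) * p‖ = ‖r ^ (m+1) * ((1 - q) * (a*p) ^ (m+1))‖ := by rw [hB m]
    _ ≤ ‖r ^ (m+1)‖ * ‖(1 - q) * (a*p) ^ (m+1)‖ := norm_mul_le _ _
    _ ≤ ‖r‖ ^ (m+1) * (‖(1:X →L[ℂ] X) - q‖ * ‖(a*p) ^ (m+1)‖) := by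
        refine mul_le_mul (norm_pow_le' r (Nat.succ_pos m)) (norm_mul_le _ _)
          (norm_nonneg _) (by positivity)
    _ = ‖(1:X →L[ℂ] X) - q‖ * ‖r‖ ^ (m+1) * ‖(a*p) ^ (m+1)‖ := by ring

private lemma gdrazin_facts {a s : X →L[ℂ] X} (h : IsGDrazinInv a s) :
    a * (1 - a*s) = (1 - a*s) * a ∧ (1 - a*s) * (1 - a*s) = 1 - a*s ∧
    IsQuasinilpotent (a * (1 - a*s)) ∧
    ∃ r, ((a + (1 - a*s)) * r = 1 ∧ r * (a + (1 - a*s)) = 1) ∧ s = (a*s) * r := by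
  obtain ⟨h1, h2, h3⟩ := h
  have haas : a*(a*s) = (a*s)*a := by
    calc a*(a*s) = a*(s*a) := by rw [h1]
    _ = (a*s)*a := by rw [mul_assoc]
  have hpa : a * (1 - a*s) = (1 - a*s) * a := by
    simp only [mul_sub, sub_mul, mul_one, one_mul]
    rw [haas]
  have hasas : (a*s)*(a*s) = a*s := by
    rw [mul_assoc, ← mul_assoc s a s, h2]
  have hp2 : (1 - a*s) * (1 - a*s) = 1 - a*s := by
    simp only [sub_mul, mul_sub, one_mul, mul_one, hasas]
    abel
  have hap_eq : a * (1 - a*s) = a - a*a*s := by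
    rw [mul_sub, mul_one, ← mul_assoc]
  have hTq : IsQuasinilpotent (a * (1 - a*s)) := by
    rw [hap_eq]; exact h3
  refine ⟨hpa, hp2, hTq, ?_⟩
  have haass : a*s*s = s := by
    rw [h1]; exact h2
  have hps : (1 - a*s) * s = 0 := by
    rw [sub_mul, one_mul, haass, sub_self]
  have hsp : s * (1 - a*s) = 0 := by
    rw [mul_sub, mul_one, ← mul_assoc, h2, sub_self]
  have hT' : spectrum ℂ (a * (1 - a*s)) = {0} := hTq
  have hm : (-1 : ℂ) ∉ spectrum ℂ (a*(1-a*s)) := by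
    rw [hT']; norm_num
  have hunit0 : IsUnit (algebraMap ℂ (X →L[ℂ] X) (-1) - a*(1-a*s)) := spectrum.notMem_iff.mp hm
  have heq : algebraMap ℂ (X →L[ℂ] X) (-1) - a*(1-a*s) = -(1 + a*(1-a*s)) := by
    simp only [Algebra.algebraMap_eq_smul_one, neg_smul, one_smul]
    abel
  rw [heq] at hunit0
  have h1ap : IsUnit (1 + a*(1-a*s)) := by simpa using hunit0.neg
  obtain ⟨w0, hw0a, hw0b⟩ := isUnit_iff_exists.mp h1ap
  have hu1 : (a + (1-a*s)) * (s + (1-a*s)) = 1 + a*(1-a*s) := by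
    simp only [add_mul, mul_add]
    rw [hps, hp2]
    abel
  have hu2 : (s + (1-a*s)) * (a + (1-a*s)) = 1 + a*(1-a*s) := by
    simp only [add_mul, mul_add]
    rw [hsp, hp2, ← hpa, ← h1]
    abel
  have hur : (a + (1-a*s)) * ((s + (1-a*s)) * w0) = 1 := by rw [← mul_assoc, hu1, hw0a]
  have hl : (w0 * (s + (1-a*s))) * (a + (1-a*s)) = 1 := by rw [mul_assoc, hu2, hw0b]
  have hre : w0 * (s + (1-a*s)) = (s + (1-a*s)) * w0 := by
    calc w0 * (s + (1-a*s))
        = (w0 * (s + (1-a*s))) * ((a + (1-a*s)) * ((s + (1-a*s)) * w0)) := by rw [hur, mul_one]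
    _ = ((w0 * (s + (1-a*s))) * (a + (1-a*s))) * ((s + (1-a*s)) * w0) := by simp only [mul_assoc]
    _ = (s + (1-a*s)) * w0 := by rw [hl, one_mul]
  have hru : ((s + (1-a*s)) * w0) * (a + (1-a*s)) = 1 := by rw [← hre, hl]
  refine ⟨(s + (1-a*s)) * w0, ⟨hur, hru⟩, ?_⟩
  have hsu : s * (a + (1-a*s)) = a * s := by
    rw [mul_add, hsp, add_zero]
    exact h1.symm
  calc s = s * ((a + (1-a*s)) * ((s + (1-a*s)) * w0)) := by rw [hur, mul_one]
  _ = (s * (a + (1-a*s))) * ((s + (1-a*s)) * w0) := by rw [mul_assoc]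
  _ = (a*s) * ((s + (1-a*s)) * w0) := by rw [hsu]

private lemma gdrazin_unique_s7 {a s₁ s₂ : X →L[ℂ] X} (h₁ : IsGDrazinInv a s₁)
    (h₂ : IsGDrazinInv a s₂) : s₁ = s₂ := by
  obtain ⟨hpa, hp2, hTp, r₁, ⟨hu1, hr1⟩, hs1⟩ := gdrazin_facts h₁
  obtain ⟨hqa, hq2, hTq, r₂, ⟨hu2, hr2⟩, hs2⟩ := gdrazin_facts h₂
  obtain ⟨hA, -⟩ := gdrazin_aux1 hpa hp2 hTp hqa hq2 hu2 hr2
  obtain ⟨-, hB⟩ := gdrazin_aux1 hqa hq2 hTq hpa hp2 hu1 hr1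
  have hA' : (1 - a*s₁) - (1 - a*s₁) * (1 - a*s₂) = 0 := by
    have : (1 - a*s₁) * (1 - (1 - a*s₂)) = 0 := hA
    rw [mul_sub, mul_one] at this
    exact this
  have hB' : (1 - a*s₂) - (1 - a*s₁) * (1 - a*s₂) = 0 := by
    have : (1 - (1 - a*s₁)) * (1 - a*s₂) = 0 := hB
    rw [sub_mul, one_mul] at this
    exact this
  have hpq : (1 - a*s₁) = (1 - a*s₂) := by
    have e1 := sub_eq_zero.mp hA'
    have e2 := sub_eq_zero.mp hB'
    rw [e1, ← e2]
  have hrr : r₁ = r₂ := by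
    calc r₁ = r₁ * ((a + (1 - a*s₂)) * r₂) := by rw [hu2, mul_one]
    _ = (r₁ * (a + (1 - a*s₂))) * r₂ := by rw [mul_assoc]
    _ = (r₁ * (a + (1 - a*s₁))) * r₂ := by rw [← hpq]
    _ = r₂ := by rw [hr1, one_mul]
  have e3 : a * s₁ = a * s₂ := by
    have := congrArg (fun x => 1 - x) hpq
    simpa using this
  rw [hs1, hs2, e3, hrr]

theorem stmt7
    (W : Y →L[ℂ] X) (hW : W ≠ 0)
    (A Adw : X →L[ℂ] Y) (hAdw : IsWgDrazinInv W A Adw)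
    (WAd : X →L[ℂ] X) (hWAd : IsGDrazinInv (W ∘L A) WAd)
    (AWd : Y →L[ℂ] Y) (hAWd : IsGDrazinInv (A ∘L W) AWd)
    (Ace : X →L[ℂ] Y) (hAce : IsWCoreEPInv W A WAd AWd Ace)
    (Aot : X →L[ℂ] Y) (hAot : Aot = Ace ∘L W ∘L Ace ∘L W ∘L A) :
    ∀ B : X →L[ℂ] Y,
      List.TFAE
        [B = Aot,
          Ace ∘L W ∘L A ∘L W ∘L B = B ∧ A ∘L W ∘L B = Ace ∘L W ∘L A,
          B ∘L W ∘L A ∘L W ∘L B = B ∧ A ∘L W ∘L B = Ace ∘L W ∘L A ∧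
            B ∘L W ∘L Ace = Ace ∘L W ∘L Ace,
          B ∘L W ∘L A ∘L W ∘L B = B ∧ A ∘L W ∘L B = Ace ∘L W ∘L A ∧
            B ∘L W ∘L Adw = Adw ∘L W ∘L Adw] := by
  -- nontriviality
  have hNY : Nontrivial Y := by
    by_contra hny
    apply hW
    have hsub : Subsingleton Y := not_nontrivial_iff_subsingleton.mp hny
    ext y
    rw [Subsingleton.elim y 0]
    simp
  -- pointwise basic facts for WAd
  have b1 : ∀ x, W (A (WAd x)) = WAd (W (A x)) := by
    intro x
    have h0 := congrArg (fun f => f x) hWAd.1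
    simpa using h0
  have b2 : ∀ x, WAd (W (A (WAd x))) = WAd x := by
    intro x
    have h0 := congrArg (fun f => f x) hWAd.2.1
    simpa using h0
  have b4 : ∀ x, WAd (WAd (W (A x))) = WAd x := by
    intro x
    rw [← b1 x]
    exact b2 x
  -- pointwise basic facts for AWd
  have t1 : ∀ y, A (W (AWd y)) = AWd (A (W y)) := by
    intro y
    have h0 := congrArg (fun f => f y) hAWd.1
    simpa using h0
  have t2 : ∀ y, AWd (A (W (AWd y))) = AWd y := by
    intro y
    have h0 := congrArg (fun f => f y) hAWd.2.1
    simpa using h0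
  have btt : ∀ y, A (W (AWd (AWd y))) = AWd y := by
    intro y
    rw [t1 (AWd y)]
    exact t2 y
  -- pointwise basic facts for Adw
  have d1 : ∀ x, A (W (Adw x)) = Adw (W (A x)) := by
    intro x
    have h0 := congrArg (fun f => f x) hAdw.1
    simpa using h0
  have d2 : ∀ x, Adw (W (A (W (Adw x)))) = Adw x := by
    intro x
    have h0 := congrArg (fun f => f x) hAdw.2.1
    simpa using h0
  -- W ∘L Adw is a gDrazin inverse of W ∘L A, hence equals WAd
  have hgD : IsGDrazinInv (W ∘L A) (W ∘L Adw) := by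
    refine ⟨?_, ?_, ?_⟩
    · ext x
      simp only [mul_apply_eq_comp, comp_apply]
      exact congrArg (fun v => W v) (d1 x)
    · ext x
      simp only [mul_apply_eq_comp, comp_apply]
      exact congrArg (fun v => W v) (d2 x)
    · have he : (W ∘L A) - (W ∘L A) * (W ∘L A) * (W ∘L Adw)
          = W ∘L (A - A ∘L W ∘L Adw ∘L W ∘L A) := by
        ext x
        simp only [mul_apply_eq_comp, comp_apply, sub_apply, map_sub]
        rw [d1 x]
      rw [he]
      exact hAdw.2.2
  have hU1 : WAd = W ∘L Adw := gdrazin_unique_s7 hWAd hgD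
  have u1 : ∀ x, W (Adw x) = WAd x := by
    intro x
    have h0 := congrArg (fun f => f x) hU1
    simpa using h0.symm
  -- A ∘L WAd ∘L WAd ∘L W is a gDrazin inverse of A ∘L W, hence equals AWd
  have hgT : IsGDrazinInv (A ∘L W) (A ∘L WAd ∘L WAd ∘L W) := by
    refine ⟨?_, ?_, ?_⟩
    · ext y
      simp only [mul_apply_eq_comp, comp_apply]
      rw [b1 (WAd (W y)), b1 (W y)]
    · ext y
      simp only [mul_apply_eq_comp, comp_apply]
      rw [b4 (W (A (WAd (WAd (W y))))), b1 (WAd (W y)), b2 (W y)]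
    · have he2 : (A ∘L W) - (A ∘L W) * (A ∘L W) * (A ∘L WAd ∘L WAd ∘L W)
          = (A - A ∘L W ∘L A ∘L WAd) ∘L W := by
        ext y
        simp only [mul_apply_eq_comp, comp_apply, sub_apply, map_sub]
        rw [b1 (WAd (W y)), b2 (W y)]
      have hvu : IsQuasinilpotent (W ∘L (A - A ∘L W ∘L A ∘L WAd)) := by
        have he3 : W ∘L (A - A ∘L W ∘L A ∘L WAd)
            = (W ∘L A) - (W ∘L A) * (W ∘L A) * WAd := by
          ext x
          simp only [mul_apply_eq_comp, comp_apply, sub_apply, map_sub]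
        rw [he3]
        exact hWAd.2.2
      rw [he2]
      exact quasinil_comp_swap hvu
  have hU2 : AWd = A ∘L WAd ∘L WAd ∘L W := gdrazin_unique_s7 hAWd hgT
  have u2 : ∀ y, AWd y = A (WAd (WAd (W y))) := by
    intro y
    have h0 := congrArg (fun f => f y) hU2
    simpa using h0
  -- facts coming from the weighted core-EP inverse
  obtain ⟨⟨hP2, hPadj, hPrange⟩, hCrange⟩ := hAce
  have c1 : ∀ x, W (A (W (Ace (WAd x)))) = WAd x := by
    intro x
    have hx : WAd x ∈ LinearMap.range ((W ∘L A ∘L W ∘L Ace : X →L[ℂ] X) : X →ₗ[ℂ] X) := by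
      rw [hPrange]
      exact LinearMap.mem_range_self _ x
    obtain ⟨y, hy⟩ := hx
    have hy' : W (A (W (Ace y))) = WAd x := by simpa using hy
    have hpp := congrArg (fun f => f y) hP2
    simp only [mul_apply_eq_comp, comp_apply] at hpp
    rw [← hy']
    exact hpp
  have c2 : ∀ x, A (W (AWd (Ace x))) = Ace x := by
    intro x
    obtain ⟨y, hy⟩ := hCrange (LinearMap.mem_range_self (Ace : X →ₗ[ℂ] Y) x)
    have hy' : AWd y = Ace x := by simpa using hy
    rw [← hy']
    exact btt y
  have c3 : ∀ x, A (WAd (W (Ace x))) = Ace x := by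
    intro x
    have h0 := c2 x
    rw [u2 (Ace x), b1 (WAd (W (Ace x))), b1 (W (Ace x)), b4 (W (Ace x))] at h0
    exact h0
  have c4 : ∀ x, W (A (WAd (W (Ace x)))) = W (Ace x) := fun x =>
    congrArg (fun v => W v) (c3 x)
  have c5 : ∀ x, W (Ace x) = WAd (W (A (W (Ace x)))) := by
    intro x
    have h0 := c4 x
    rw [b1 (W (Ace x))] at h0
    exact h0.symm
  have hken : ∀ y, W (A (W (Ace (W (A (W (Ace y))))))) = W (A (W (Ace y))) := by
    intro y
    have hpp := congrArg (fun f => f y) hP2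
    simpa using hpp
  have c6 : ∀ x, W (Ace (W (A (W (Ace x))))) = W (Ace x) := by
    intro x
    rw [c5 (W (A (W (Ace x)))), hken x, ← c5 x]
  have c7 : ∀ x, Ace (W (A (W (Ace x)))) = Ace x := by
    intro x
    rw [← c3 (W (A (W (Ace x)))), c6 x, c3 x]
  have c8 : ∀ y, W (Ace (W (Ace y))) = WAd (W (Ace y)) := by
    intro y
    calc W (Ace (W (Ace y))) = WAd (W (A (W (Ace (W (Ace y)))))) := c5 (W (Ace y))
    _ = WAd (W (A (W (Ace (WAd (W (A (W (Ace y))))))))) := by conv_lhs => rw [c5 y]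
    _ = WAd (WAd (W (A (W (Ace y))))) := by rw [c1 (W (A (W (Ace y))))]
    _ = WAd (W (Ace y)) := by rw [← c5 y]
  have c9 : ∀ x, W (Ace (WAd x)) = WAd (WAd x) := by
    intro x
    calc W (Ace (WAd x)) = WAd (W (A (W (Ace (WAd x))))) := c5 (WAd x)
    _ = WAd (WAd x) := by rw [c1 x]
  have c10 : ∀ x, Ace (WAd x) = A (WAd (WAd (WAd x))) := by
    intro x
    calc Ace (WAd x) = A (WAd (W (Ace (WAd x)))) := (c3 (WAd x)).symm
    _ = A (WAd (WAd (WAd x))) := by rw [c9 x]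
  have d1' : ∀ z, Adw (W (A z)) = A (WAd z) := by
    intro z
    rw [← d1 z, u1 z]
  have d_rep : ∀ x, Adw x = A (WAd (WAd x)) := by
    intro x
    have h0 := d2 x
    rw [u1 x, d1' (WAd x)] at h0
    exact h0.symm
  -- the TFAE
  intro B
  have hAotp : ∀ x, Aot x = Ace (W (Ace (W (A x)))) := by
    intro x
    rw [hAot]
    simp only [comp_apply]
  tfae_have 1 → 2 := by
    rintro rfl
    constructor
    · ext x
      simp only [comp_apply]
      rw [hAotp x]
      exact c7 (W (Ace (W (A x))))
    · ext x
      simp only [comp_apply]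
      rw [hAotp x, c8 (W (A x))]
      exact c3 (W (A x))
  tfae_have 2 → 1 := by
    rintro ⟨h2a, h2b⟩
    have p2a : ∀ x, Ace (W (A (W (B x)))) = B x := by
      intro x
      have h0 := congrArg (fun f => f x) h2a
      simpa using h0
    have p2b : ∀ x, A (W (B x)) = Ace (W (A x)) := by
      intro x
      have h0 := congrArg (fun f => f x) h2b
      simpa using h0
    ext x
    rw [hAotp x, ← p2a x, p2b x]
  tfae_have 1 → 3 := by
    rintro rfl
    refine ⟨?_, ?_, ?_⟩
    · ext x
      simp only [comp_apply, hAotp]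
      rw [c8 (W (A x)), c3 (W (A x)), c7 (W (A x))]
    · ext x
      simp only [comp_apply]
      rw [hAotp x, c8 (W (A x))]
      exact c3 (W (A x))
    · ext x
      simp only [comp_apply, hAotp]
      rw [c6 x]
  tfae_have 3 → 1 := by
    rintro ⟨h3a, h3b, h3c⟩
    have p3a : ∀ x, B (W (A (W (B x)))) = B x := by
      intro x
      have h0 := congrArg (fun f => f x) h3a
      simpa using h0
    have p3b : ∀ x, A (W (B x)) = Ace (W (A x)) := by
      intro x
      have h0 := congrArg (fun f => f x) h3b
      simpa using h0
    have p3c : ∀ x, B (W (Ace x)) = Ace (W (Ace x)) := by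
      intro x
      have h0 := congrArg (fun f => f x) h3c
      simpa using h0
    ext x
    rw [hAotp x, ← p3a x, p3b x, p3c (W (A x))]
  tfae_have 1 → 4 := by
    rintro rfl
    refine ⟨?_, ?_, ?_⟩
    · ext x
      simp only [comp_apply, hAotp]
      rw [c8 (W (A x)), c3 (W (A x)), c7 (W (A x))]
    · ext x
      simp only [comp_apply]
      rw [hAotp x, c8 (W (A x))]
      exact c3 (W (A x))
    · ext x
      simp only [comp_apply]
      rw [u1 x]
      simp only [hAotp]
      rw [b1 x, c9 (W (A x)), c10 (WAd (W (A x))), b4 x, d_rep (WAd x)]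
  tfae_have 4 → 1 := by
    rintro ⟨h4a, h4b, h4c⟩
    have p4a : ∀ x, B (W (A (W (B x)))) = B x := by
      intro x
      have h0 := congrArg (fun f => f x) h4a
      simpa using h0
    have p4b : ∀ x, A (W (B x)) = Ace (W (A x)) := by
      intro x
      have h0 := congrArg (fun f => f x) h4b
      simpa using h0
    have p4c : ∀ x, B (W (Adw x)) = Adw (W (Adw x)) := by
      intro x
      have h0 := congrArg (fun f => f x) h4c
      simpa using h0
    have p4c' : ∀ y, B (WAd y) = A (WAd (WAd (WAd y))) := by
      intro y
      have h0 := p4c y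
      rw [u1 y, d_rep (WAd y)] at h0
      exact h0
    ext x
    rw [hAotp x, ← p4a x, p4b x, c5 (W (A x)),
      p4c' (W (A (W (Ace (W (A x)))))), c10 (W (A (W (Ace (W (A x))))))]
  tfae_finish
end

section
/- Let A ∈ B(X) be generalized Drazin invertible. Then, for B ∈ B(X), the following statements are equivalent: (i) B = A^⊗; (ii) A^ⓓAB = B and AB = A^ⓓA; (iii) BAB = B, AB = A^ⓓA and BA^ⓓ = A^ⓓA^ⓓ; (iv) BAB = B, AB = A^ⓓA and BA^d = (A^d)². -/
open ContinuousLinearMap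

variable {X Y : Type*}
  [NormedAddCommGroup X] [InnerProductSpace ℂ X] [CompleteSpace X]
  [NormedAddCommGroup Y] [InnerProductSpace ℂ Y] [CompleteSpace Y]

theorem stmt8
    (A Ad : X →L[ℂ] X) (hAd : IsGDrazinInv A Ad)
    (Ace : X →L[ℂ] X) (hAce : IsCoreEPInv A Ad Ace)
    (Aot : X →L[ℂ] X) (hAot : Aot = Ace * Ace * A) :
    ∀ B : X →L[ℂ] X,
      List.TFAE
        [B = Aot,
          Ace * A * B = B ∧ A * B = Ace * A,
          B * A * B = B ∧ A * B = Ace * A ∧ B * Ace = Ace * Ace,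
          B * A * B = B ∧ A * B = Ace * A ∧ B * Ad = Ad * Ad] := by
  classical
  obtain ⟨hcomm, houter, -⟩ := hAd
  obtain ⟨⟨hP2, -, hPr⟩, hr⟩ := hAce
  -- the projection `A * Ace` fixes every element of `R(Ad)`
  have fixP : ∀ y ∈ LinearMap.range (Ad : X →ₗ[ℂ] X), (A * Ace) y = y := by
    intro y hy
    rw [← hPr] at hy
    obtain ⟨z, rfl⟩ := hy
    calc (A * Ace) ((A * Ace) z) = ((A * Ace) * (A * Ace)) z := rfl
      _ = (A * Ace) z := by rw [hP2]
  have F2 : A * Ace * Ad = Ad := by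
    ext x
    have h := fixP (Ad x) (LinearMap.mem_range_self _ x)
    simpa [mul_assoc, ContinuousLinearMap.mul_apply] using h
  have F3 : A * Ace * Ace = Ace := by
    ext x
    have h := fixP (Ace x) (hr (LinearMap.mem_range_self _ x))
    simpa [mul_assoc, ContinuousLinearMap.mul_apply] using h
  have F4 : Ad * A * Ace = Ace := by
    ext x
    obtain ⟨z, hz⟩ := hr (LinearMap.mem_range_self (Ace : X →ₗ[ℂ] X) x)
    replace hz : Ad z = Ace x := hz
    calc (Ad * A * Ace) x = (Ad * A) (Ace x) := rfl
      _ = (Ad * A) (Ad z) := by rw [hz]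
      _ = (Ad * A * Ad) z := rfl
      _ = Ad z := by rw [houter]
      _ = Ace x := hz
  have F5 : Ace * A * Ace = Ace := by
    calc Ace * A * Ace = Ad * ((A * Ace) * (A * Ace)) := by
          nth_rewrite 1 [← F4]; simp only [mul_assoc]
      _ = Ad * (A * Ace) := by rw [hP2]
      _ = Ace := by rw [← mul_assoc, F4]
  have F6 : Ace * A * Ad = Ad := by
    calc Ace * A * Ad = Ad * A * Ace * (A * Ad) := by
          nth_rewrite 1 [← F4]; simp only [mul_assoc]
      _ = Ad * A * Ace * Ad * A := by rw [hcomm, ← mul_assoc]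
      _ = Ad * (A * Ace * Ad) * A := by simp only [mul_assoc]
      _ = Ad * Ad * A := by rw [F2]
      _ = Ad * (A * Ad) := by rw [hcomm, ← mul_assoc]
      _ = Ad := by rw [← mul_assoc, houter]
  have F7 : Ace * Ad = Ad * Ad := by
    calc Ace * Ad = Ad * (A * Ace * Ad) := by
          nth_rewrite 1 [← F4]; simp only [mul_assoc]
      _ = Ad * Ad := by rw [F2]
  have F8 : Ace * Ace = Ad * Ace := by
    calc Ace * Ace = Ad * (A * Ace * Ace) := by
          nth_rewrite 1 [← F4]; simp only [mul_assoc]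
      _ = Ad * Ace := by rw [F3]
  intro B
  tfae_have 1 → 2 := by
    rintro rfl
    rw [hAot]
    constructor
    · calc Ace * A * (Ace * Ace * A) = Ace * A * Ace * (Ace * A) := by
            simp only [mul_assoc]
        _ = Ace * (Ace * A) := by rw [F5]
        _ = Ace * Ace * A := by rw [← mul_assoc]
    · calc A * (Ace * Ace * A) = A * Ace * Ace * A := by simp only [mul_assoc]
        _ = Ace * A := by rw [F3]
  tfae_have 2 → 1 := by
    rintro ⟨h1, h2⟩
    rw [hAot, ← h1, mul_assoc, h2, ← mul_assoc]
  tfae_have 1 → 3 := by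
    rintro rfl
    rw [hAot]
    refine ⟨?_, ?_, ?_⟩
    · calc Ace * Ace * A * A * (Ace * Ace * A)
          = Ace * Ace * (A * (A * Ace * Ace) * A) := by simp only [mul_assoc]
        _ = Ace * Ace * (A * Ace * A) := by rw [F3]
        _ = Ace * (Ace * A * Ace) * A := by simp only [mul_assoc]
        _ = Ace * Ace * A := by rw [F5]
    · calc A * (Ace * Ace * A) = A * Ace * Ace * A := by simp only [mul_assoc]
        _ = Ace * A := by rw [F3]
    · calc Ace * Ace * A * Ace = Ace * (Ace * A * Ace) := by simp only [mul_assoc]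
        _ = Ace * Ace := by rw [F5]
  tfae_have 3 → 1 := by
    rintro ⟨h1, h2, h3⟩
    rw [hAot, ← h1, mul_assoc, h2, ← mul_assoc, h3]
  tfae_have 1 → 4 := by
    rintro rfl
    rw [hAot]
    refine ⟨?_, ?_, ?_⟩
    · calc Ace * Ace * A * A * (Ace * Ace * A)
          = Ace * Ace * (A * (A * Ace * Ace) * A) := by simp only [mul_assoc]
        _ = Ace * Ace * (A * Ace * A) := by rw [F3]
        _ = Ace * (Ace * A * Ace) * A := by simp only [mul_assoc]
        _ = Ace * Ace * A := by rw [F5]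
    · calc A * (Ace * Ace * A) = A * Ace * Ace * A := by simp only [mul_assoc]
        _ = Ace * A := by rw [F3]
    · calc Ace * Ace * A * Ad = Ace * (Ace * A * Ad) := by simp only [mul_assoc]
        _ = Ace * Ad := by rw [F6]
        _ = Ad * Ad := F7
  tfae_have 4 → 1 := by
    rintro ⟨h1, h2, h3⟩
    have hBAce : B * Ace = Ace * Ace := by
      calc B * Ace = B * (Ad * (A * Ace)) := by
            nth_rewrite 1 [← F4]; simp only [mul_assoc]
        _ = B * Ad * (A * Ace) := by rw [← mul_assoc]
        _ = Ad * Ad * (A * Ace) := by rw [h3]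
        _ = Ad * (Ad * A * Ace) := by simp only [mul_assoc]
        _ = Ad * Ace := by rw [F4]
        _ = Ace * Ace := F8.symm
    rw [hAot, ← h1, mul_assoc, h2, ← mul_assoc, hBAce]
  tfae_finish
end

section
/- Let W ∈ B(Y,X) be nonzero and let A ∈ B(X,Y) be Wg-Drazin invertible. Then X = R(WA^{d,W}) ⊕ N(A^{ⓓ,W}WA), and with P = P_{R(WA^{d,W}), N(A^{ⓓ,W}WA)} (the idempotent with range R(WA^{d,W}) and kernel N(A^{ⓓ,W}WA)) one has A^{⊗,W} = A^{ⓓ,W}P and A^{⊗,W} = A^{d,W}P. -/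
open ContinuousLinearMap

variable {X Y : Type*}
  [NormedAddCommGroup X] [InnerProductSpace ℂ X] [CompleteSpace X]
  [NormedAddCommGroup Y] [InnerProductSpace ℂ Y] [CompleteSpace Y]

section Helpers

open Filter Topology

variable {Z : Type*} [NormedAddCommGroup Z] [InnerProductSpace ℂ Z] [CompleteSpace Z]

private lemma qn_pow_le (M : Z →L[ℂ] Z) (hM : IsQuasinilpotent M) {ε : ℝ} (hε : 0 < ε) :
    ∀ᶠ n : ℕ in atTop, ‖M ^ n‖ ≤ ε ^ n := by
  have hr : spectralRadius ℂ M = 0 := by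
    unfold spectralRadius
    rw [hM]
    simp
  have h := spectrum.pow_nnnorm_pow_one_div_tendsto_nhds_spectralRadius M
  rw [hr] at h
  set e : ℝ := min ε 1 with he
  have he0 : 0 < e := lt_min hε one_pos
  have h2 : ∀ᶠ n : ℕ in atTop, (‖M ^ n‖₊ : ENNReal) ^ (1 / n : ℝ) < ENNReal.ofReal e :=
    h.eventually (gt_mem_nhds (by simpa using he0))
  filter_upwards [h2, eventually_ge_atTop 1] with n hn hn1
  have hne : (n : ℝ) ≠ 0 := by positivity
  have h3 : ((‖M ^ n‖₊ : ENNReal) ^ (1 / n : ℝ)) ^ (n : ℕ) ≤ (ENNReal.ofReal e) ^ n :=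
    pow_le_pow_left₀ zero_le hn.le n
  rw [← ENNReal.rpow_natCast ((‖M ^ n‖₊ : ENNReal) ^ (1 / n : ℝ)), ← ENNReal.rpow_mul,
    one_div, inv_mul_cancel₀ hne, ENNReal.rpow_one] at h3
  rw [← ENNReal.ofReal_pow he0.le] at h3
  rw [← enorm_eq_nnnorm, ← ofReal_norm] at h3
  have h4 : ‖M ^ n‖ ≤ e ^ n := by
    rwa [ENNReal.ofReal_le_ofReal_iff (by positivity)] at h3
  exact h4.trans (pow_le_pow_left₀ he0.le (min_le_left _ _) n)

private lemma eq_zero_of_bound (Zo : Z →L[ℂ] Z) (U M : Z →L[ℂ] Z) (hM : IsQuasinilpotent M)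
    (h : ∀ n : ℕ, 1 ≤ n → ‖Zo‖ ≤ ‖U‖ ^ n * ‖M ^ n‖) : Zo = 0 := by
  set ε : ℝ := 1 / (2 * (‖U‖ + 1)) with hε
  have hεpos : 0 < ε := by positivity
  have key : ∀ᶠ n : ℕ in atTop, ‖Zo‖ ≤ (1/2 : ℝ) ^ n := by
    filter_upwards [qn_pow_le M hM hεpos, eventually_ge_atTop 1] with n h1 h2
    calc ‖Zo‖ ≤ ‖U‖ ^ n * ‖M ^ n‖ := h n h2
      _ ≤ ‖U‖ ^ n * ε ^ n := by
          exact mul_le_mul_of_nonneg_left h1 (by positivity)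
      _ = (‖U‖ * ε) ^ n := by rw [mul_pow]
      _ ≤ (1/2 : ℝ) ^ n := by
          apply pow_le_pow_left₀ (by positivity)
          have h' : ‖U‖ * ε = ‖U‖ / (2 * (‖U‖ + 1)) := by rw [hε]; ring
          rw [h', div_le_div_iff₀ (by positivity) (by norm_num : (0:ℝ) < 2)]
          nlinarith [norm_nonneg U]
  have : ‖Zo‖ ≤ 0 :=
    ge_of_tendsto (tendsto_pow_atTop_nhds_zero_of_lt_one (by norm_num) (by norm_num)) key
  simpa using le_antisymm this (norm_nonneg _)

private lemma gdrazin_unique_s9 {T B C : Z →L[ℂ] Z} (hB : IsGDrazinInv T B)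
    (hC : IsGDrazinInv T C) : B = C := by
  obtain ⟨hB1, hB2, hB3⟩ := hB
  obtain ⟨hC1, hC2, hC3⟩ := hC
  have hcomTB : Commute T B := hB1
  have hcomTC : Commute T C := hC1
  set p : Z →L[ℂ] Z := T * B with hp
  set q : Z →L[ℂ] Z := T * C with hq
  have hpi : IsIdempotentElem p := by
    show p * p = p
    rw [hp, mul_assoc, ← mul_assoc B T B, hB2]
  have hqi : IsIdempotentElem q := by
    show q * q = q
    rw [hq, mul_assoc, ← mul_assoc C T C, hC2]
  have hTp : Commute T p := (Commute.refl T).mul_right hcomTB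
  have hTq : Commute T q := (Commute.refl T).mul_right hcomTC
  have hT1p : Commute T (1 - p) := (Commute.one_right T).sub_right hTp
  have hT1q : Commute T (1 - q) := (Commute.one_right T).sub_right hTq
  have hNdef : T - T * T * B = T * (1 - p) := by
    rw [mul_sub, mul_one, hp, ← mul_assoc]
  have hMdef : T - T * T * C = T * (1 - q) := by
    rw [mul_sub, mul_one, hq, ← mul_assoc]
  rw [hNdef] at hB3
  rw [hMdef] at hC3
  have claimA : ∀ n : ℕ, 1 ≤ n → (1 - q) * p = (T * (1 - q)) ^ n * B ^ n := by
    intro n hn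
    obtain ⟨m, rfl⟩ := Nat.exists_eq_add_of_le hn
    calc (1 - q) * p = (1 - q) * p ^ (1 + m) := by
          rw [add_comm 1 m, hpi.pow_succ_eq]
      _ = (1 - q) * (T ^ (1 + m) * B ^ (1 + m)) := by rw [hp, hcomTB.mul_pow]
      _ = ((1 - q) * T ^ (1 + m)) * B ^ (1 + m) := by rw [mul_assoc]
      _ = (T ^ (1 + m) * (1 - q)) * B ^ (1 + m) := by rw [(hT1q.symm.pow_right (1 + m)).eq]
      _ = (T ^ (1 + m) * (1 - q) ^ (1 + m)) * B ^ (1 + m) := by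
          rw [add_comm 1 m, hqi.one_sub.pow_succ_eq]
      _ = (T * (1 - q)) ^ (1 + m) * B ^ (1 + m) := by rw [hT1q.mul_pow]
  have claimB : ∀ n : ℕ, 1 ≤ n → q * (1 - p) = C ^ n * (T * (1 - p)) ^ n := by
    intro n hn
    obtain ⟨m, rfl⟩ := Nat.exists_eq_add_of_le hn
    calc q * (1 - p) = q ^ (1 + m) * (1 - p) := by
          rw [add_comm 1 m, hqi.pow_succ_eq]
      _ = (C ^ (1 + m) * T ^ (1 + m)) * (1 - p) := by
          rw [hq, hcomTC.eq, hcomTC.symm.mul_pow]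
      _ = C ^ (1 + m) * (T ^ (1 + m) * (1 - p)) := by rw [mul_assoc]
      _ = C ^ (1 + m) * (T ^ (1 + m) * (1 - p) ^ (1 + m)) := by
          rw [add_comm 1 m, hpi.one_sub.pow_succ_eq]
      _ = C ^ (1 + m) * (T * (1 - p)) ^ (1 + m) := by rw [hT1p.mul_pow]
  have hA0 : (1 - q) * p = 0 := by
    apply eq_zero_of_bound _ B (T * (1 - q)) hC3
    intro n hn
    rw [claimA n hn]
    calc ‖(T * (1 - q)) ^ n * B ^ n‖ ≤ ‖(T * (1 - q)) ^ n‖ * ‖B ^ n‖ := norm_mul_le _ _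
      _ ≤ ‖(T * (1 - q)) ^ n‖ * ‖B‖ ^ n := by
          exact mul_le_mul_of_nonneg_left (norm_pow_le' B (by omega)) (norm_nonneg _)
      _ = ‖B‖ ^ n * ‖(T * (1 - q)) ^ n‖ := by ring
  have hB0 : q * (1 - p) = 0 := by
    apply eq_zero_of_bound _ C (T * (1 - p)) hB3
    intro n hn
    rw [claimB n hn]
    calc ‖C ^ n * (T * (1 - p)) ^ n‖ ≤ ‖C ^ n‖ * ‖(T * (1 - p)) ^ n‖ := norm_mul_le _ _
      _ ≤ ‖C‖ ^ n * ‖(T * (1 - p)) ^ n‖ := by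
          exact mul_le_mul_of_nonneg_right (norm_pow_le' C (by omega)) (norm_nonneg _)
  have e1 : p = q * p := by
    rw [sub_mul, one_mul, sub_eq_zero] at hA0
    exact hA0
  have e2 : q = q * p := by
    rw [mul_sub, mul_one, sub_eq_zero] at hB0
    exact hB0
  have hpq : p = q := e1.trans e2.symm
  calc B = B * p := by rw [hp, ← mul_assoc, hB2]
    _ = B * q := by rw [hpq]
    _ = (B * T) * C := by rw [hq, ← mul_assoc]
    _ = p * C := by rw [← hB1]
    _ = q * C := by rw [hpq]
    _ = (C * T) * C := by rw [hC1]
    _ = C := hC2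

private lemma quasinil_swap {V W' : Type*} [NormedAddCommGroup V] [InnerProductSpace ℂ V]
    [CompleteSpace V] [NormedAddCommGroup W'] [InnerProductSpace ℂ W'] [CompleteSpace W']
    [Nontrivial W'] (S : V →L[ℂ] W') (R : W' →L[ℂ] V)
    (h : IsQuasinilpotent (R ∘L S)) : IsQuasinilpotent (S ∘L R) := by
  have hsub : spectrum ℂ (S ∘L R) ⊆ {0} := by
    intro z hz
    by_contra hz0
    have hz0' : z ≠ 0 := hz0
    have hzr : z ∉ spectrum ℂ (R ∘L S) := by
      rw [h]
      simpa using hz0'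
    rw [spectrum.mem_iff, not_not] at hzr
    obtain ⟨u, hu⟩ := hzr
    set Vi : V →L[ℂ] V := ↑u⁻¹ with hVi
    have hu1 : ∀ v : V, z • Vi v - R (S (Vi v)) = v := by
      intro v
      have := DFunLike.congr_fun u.mul_inv v
      rw [hu] at this
      simpa [Algebra.algebraMap_eq_smul_one, mul_apply, sub_apply, smul_apply, one_apply,
        comp_apply, map_sub, map_smul] using this
    have hu2 : ∀ v : V, Vi (z • v - R (S v)) = v := by
      intro v
      have := DFunLike.congr_fun u.inv_mul v
      rw [hu] at this
      simpa [Algebra.algebraMap_eq_smul_one, mul_apply, sub_apply, smul_apply, one_apply,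
        comp_apply, map_sub, map_smul] using this
    have hA1 : ∀ v : V, R (S (Vi v)) = z • Vi v - v := by
      intro v
      have h' := hu1 v
      rw [sub_eq_iff_eq_add] at h'
      rw [h', add_sub_cancel_left]
    have hA2 : ∀ v : V, Vi (R (S v)) = z • Vi v - v := by
      intro v
      have h' := hu2 v
      rw [map_sub, map_smul, sub_eq_iff_eq_add] at h'
      rw [h', add_sub_cancel_left]
    set G' : W' →L[ℂ] W' := z⁻¹ • ((1 : W' →L[ℂ] W') + S ∘L Vi ∘L R) with hG'
    have key1 : (algebraMap ℂ (W' →L[ℂ] W') z - S ∘L R) * G' = 1 := by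
      ext w
      simp only [hG', Algebra.algebraMap_eq_smul_one, ContinuousLinearMap.mul_apply, ContinuousLinearMap.smul_apply, ContinuousLinearMap.one_apply,
        ContinuousLinearMap.add_apply, comp_apply, ContinuousLinearMap.sub_apply, map_add, map_sub, map_smul, smul_add, smul_sub,
        smul_smul]
      simp only [hA1, hA2, map_add, map_sub, map_smul, smul_add, smul_sub, smul_smul]
      match_scalars <;> field_simp <;> ring
    have key2 : G' * (algebraMap ℂ (W' →L[ℂ] W') z - S ∘L R) = 1 := by
      ext w
      simp only [hG', Algebra.algebraMap_eq_smul_one, ContinuousLinearMap.mul_apply, ContinuousLinearMap.smul_apply, ContinuousLinearMap.one_apply,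
        ContinuousLinearMap.add_apply, comp_apply, ContinuousLinearMap.sub_apply, map_add, map_sub, map_smul, smul_add, smul_sub,
        smul_smul]
      simp only [hA1, hA2, map_add, map_sub, map_smul, smul_add, smul_sub, smul_smul]
      match_scalars <;> field_simp <;> ring
    have hunit : IsUnit (algebraMap ℂ (W' →L[ℂ] W') z - S ∘L R) :=
      ⟨⟨_, G', key1, key2⟩, rfl⟩
    rw [spectrum.mem_iff] at hz
    exact hz hunit
  obtain ⟨z, hzmem⟩ := spectrum.nonempty (S ∘L R)
  have hz0 : z = 0 := hsub hzmem
  apply Set.Subset.antisymm hsub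
  intro w hw
  rw [Set.mem_singleton_iff] at hw
  rw [hw, ← hz0]
  exact hzmem

end Helpers

theorem stmt9
    (W : Y →L[ℂ] X) (hW : W ≠ 0)
    (A Adw : X →L[ℂ] Y) (hAdw : IsWgDrazinInv W A Adw)
    (WAd : X →L[ℂ] X) (hWAd : IsGDrazinInv (W ∘L A) WAd)
    (AWd : Y →L[ℂ] Y) (hAWd : IsGDrazinInv (A ∘L W) AWd)
    (Ace : X →L[ℂ] Y) (hAce : IsWCoreEPInv W A WAd AWd Ace)
    (Aot : X →L[ℂ] Y) (hAot : Aot = Ace ∘L W ∘L Ace ∘L W ∘L A) :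
    IsCompl (LinearMap.range ((W ∘L Adw : X →L[ℂ] X) : X →ₗ[ℂ] X)) (LinearMap.ker ((Ace ∘L W ∘L A : X →L[ℂ] Y) : X →ₗ[ℂ] Y)) ∧
    ∀ P : X →L[ℂ] X,
      IsIdempotentOnAlong P (LinearMap.range ((W ∘L Adw : X →L[ℂ] X) : X →ₗ[ℂ] X)) (LinearMap.ker ((Ace ∘L W ∘L A : X →L[ℂ] Y) : X →ₗ[ℂ] Y)) →
        Aot = Ace ∘L P ∧ Aot = Adw ∘L P := by
  obtain ⟨h1, h2, h3⟩ := hAdw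
  obtain ⟨⟨hQ2, hQadj, hQr⟩, hAceR⟩ := hAce
  haveI hYnt : Nontrivial Y := by
    by_contra hnt
    apply hW
    have : Subsingleton Y := not_nontrivial_iff_subsingleton.mp hnt
    ext y
    simp [Subsingleton.elim y 0]
  have f1 : ∀ x : X, A (W (Adw x)) = Adw (W (A x)) := fun x => by
    simpa using DFunLike.congr_fun h1 x
  have f2 : ∀ x : X, Adw (W (A (W (Adw x)))) = Adw x := fun x => by
    simpa using DFunLike.congr_fun h2 x
  -- W ∘L Adw is a generalized Drazin inverse of W ∘L A, hence equals WAd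
  have hBgd : IsGDrazinInv (W ∘L A) (W ∘L Adw) := by
    refine ⟨?_, ?_, ?_⟩
    · ext x
      simp only [ContinuousLinearMap.mul_apply, comp_apply]
      rw [f1]
    · ext x
      simp only [ContinuousLinearMap.mul_apply, comp_apply]
      rw [f2]
    · have heq : (W ∘L A) - (W ∘L A) * (W ∘L A) * (W ∘L Adw)
          = W ∘L (A - A ∘L W ∘L Adw ∘L W ∘L A) := by
        ext x
        simp only [ContinuousLinearMap.sub_apply, ContinuousLinearMap.mul_apply, comp_apply, map_sub]
        simp only [f1]
      rw [heq]
      exact h3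
  have hWAdeq : W ∘L Adw = WAd := gdrazin_unique_s9 hBgd hWAd
  -- Adw ∘L W is a generalized Drazin inverse of A ∘L W, hence equals AWd
  have hCgd : IsGDrazinInv (A ∘L W) (Adw ∘L W) := by
    refine ⟨?_, ?_, ?_⟩
    · ext y
      simp only [ContinuousLinearMap.mul_apply, comp_apply]
      rw [f1]
    · ext y
      simp only [ContinuousLinearMap.mul_apply, comp_apply]
      rw [f2]
    · have heq : (A ∘L W) - (A ∘L W) * (A ∘L W) * (Adw ∘L W)
          = (A - A ∘L W ∘L Adw ∘L W ∘L A) ∘L W := by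
        ext y
        simp only [ContinuousLinearMap.sub_apply, ContinuousLinearMap.mul_apply, comp_apply, map_sub]
        simp only [f1]
      rw [heq]
      exact quasinil_swap _ W h3
  have hAWdeq : Adw ∘L W = AWd := gdrazin_unique_s9 hCgd hAWd
  -- the projection Q = W A W Ace
  set Qop : X →L[ℂ] X := W ∘L A ∘L W ∘L Ace with hQopdef
  have hQpt : ∀ x : X, Qop x = W (A (W (Ace x))) := fun x => rfl
  have hQfix : ∀ x : X, Qop (Qop x) = Qop x := fun x => by
    simpa [mul_apply] using DFunLike.congr_fun hQ2 x
  have hQr' : LinearMap.range (Qop : X →ₗ[ℂ] X) = LinearMap.range ((W ∘L Adw : X →L[ℂ] X) : X →ₗ[ℂ] X) := by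
    rw [hQr, ← hWAdeq]
  have hQid : ∀ u : X, u ∈ LinearMap.range ((W ∘L Adw : X →L[ℂ] X) : X →ₗ[ℂ] X) → Qop u = u := by
    intro u hu
    rw [← hQr'] at hu
    obtain ⟨v, rfl⟩ := LinearMap.mem_range.mp hu
    exact hQfix v
  have hAWdpt : ∀ y : Y, AWd y = Adw (W y) := fun y => by rw [← hAWdeq]; rfl
  have F5 : ∀ y : Y, AWd (A (W (AWd y))) = AWd y := fun y => by
    simpa [mul_apply, comp_apply] using DFunLike.congr_fun hAWd.2.1 y
  have E1 : ∀ x : X, Ace x = Adw (Qop x) := by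
    intro x
    have hmem : Ace x ∈ LinearMap.range (AWd : Y →ₗ[ℂ] Y) :=
      hAceR (LinearMap.mem_range.mpr ⟨x, rfl⟩)
    obtain ⟨y, hy⟩ := LinearMap.mem_range.mp hmem
    calc Ace x = AWd y := hy.symm
      _ = AWd (A (W (AWd y))) := (F5 y).symm
      _ = Adw (Qop x) := by rw [ContinuousLinearMap.coe_coe] at hy; rw [hy, hAWdpt]; rfl
  have E4 : ∀ u : X, Qop (W (Ace u)) = W (Ace u) := by
    intro u
    apply hQid
    refine LinearMap.mem_range.mpr ⟨Qop u, ?_⟩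
    simp only [ContinuousLinearMap.coe_coe, comp_apply]
    rw [← E1]
  have E5 : ∀ x : X, Ace (Qop x) = Ace x := by
    intro x
    rw [E1 (Qop x), hQfix, ← E1]
  have E5' : ∀ t : X, Ace (W (A (W (Ace t)))) = Ace t := fun t => E5 t
  -- the idempotent G
  set G : X →L[ℂ] X := W ∘L Ace ∘L W ∘L A with hGdef
  have hGpt : ∀ x : X, G x = W (Ace (W (A x))) := fun x => rfl
  have hGfix : ∀ x : X, G (G x) = G x := by
    intro x
    simp only [hGpt]
    rw [E5']
  have hGr : LinearMap.range (G : X →ₗ[ℂ] X) = LinearMap.range ((W ∘L Adw : X →L[ℂ] X) : X →ₗ[ℂ] X) := by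
    apply le_antisymm
    · rintro u hu
      obtain ⟨x, rfl⟩ := LinearMap.mem_range.mp hu
      refine LinearMap.mem_range.mpr ⟨Qop (W (A x)), ?_⟩
      simp only [ContinuousLinearMap.coe_coe, comp_apply]
      rw [← E1]
      exact (hGpt x).symm
    · rintro u hu
      obtain ⟨x, rfl⟩ := LinearMap.mem_range.mp hu
      refine LinearMap.mem_range.mpr ⟨(W ∘L Adw) x, ?_⟩
      have key : ∀ v : X, Ace (W (Adw v)) = Adw (W (Adw v)) := by
        intro v
        rw [E1]
        congr 1
        exact hQid _ (LinearMap.mem_range.mpr ⟨v, rfl⟩)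
      show G (W (Adw x)) = W (Adw x)
      rw [hGpt, f1, key, ← f1, f2]
  have hGk : LinearMap.ker (G : X →ₗ[ℂ] X) = LinearMap.ker ((Ace ∘L W ∘L A : X →L[ℂ] Y) : X →ₗ[ℂ] Y) := by
    ext x
    simp only [LinearMap.mem_ker]
    constructor
    · intro hx
      show Ace (W (A x)) = 0
      rw [E1]
      have h0 : Qop (W (A x)) = 0 := by
        have hh : Qop (W (A x)) = W (A (G x)) := rfl
        rw [hh, show G x = 0 from hx, map_zero, map_zero]
      rw [h0, map_zero]
    · intro hx
      have hx' : Ace (W (A x)) = 0 := hx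
      show W (Ace (W (A x))) = 0
      rw [hx', map_zero]
  refine ⟨?_, ?_⟩
  · rw [← hGr, ← hGk]
    constructor
    · apply Submodule.disjoint_def.mpr
      intro u hu1 hu2
      obtain ⟨x, rfl⟩ := LinearMap.mem_range.mp hu1
      have h0 : G (G x) = 0 := LinearMap.mem_ker.mp hu2
      rw [hGfix] at h0
      exact h0
    · rw [codisjoint_iff, eq_top_iff]
      intro x _
      apply Submodule.mem_sup.mpr
      exact ⟨G x, LinearMap.mem_range.mpr ⟨x, rfl⟩, x - G x,
        LinearMap.mem_ker.mpr (by rw [map_sub, ContinuousLinearMap.coe_coe, hGfix, sub_self]), by abel⟩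
  · intro P hP
    obtain ⟨hP2, hPr, hPk⟩ := hP
    have hPfix : ∀ x : X, P (G x) = G x := by
      intro x
      have hmem : G x ∈ LinearMap.range (P : X →ₗ[ℂ] X) := by
        rw [hPr, ← hGr]
        exact LinearMap.mem_range.mpr ⟨x, rfl⟩
      obtain ⟨y, hy⟩ := LinearMap.mem_range.mp hmem
      rw [← hy]
      simpa [mul_apply] using DFunLike.congr_fun hP2 y
    have hPker : ∀ x : X, P (x - G x) = 0 := by
      intro x
      have hmem : x - G x ∈ LinearMap.ker (P : X →ₗ[ℂ] X) := by
        rw [hPk, ← hGk]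
        exact LinearMap.mem_ker.mpr (by rw [map_sub, ContinuousLinearMap.coe_coe, hGfix, sub_self])
      exact LinearMap.mem_ker.mp hmem
    have hPG : P = G := by
      ext x
      have hsplit : x = G x + (x - G x) := by abel
      calc P x = P (G x + (x - G x)) := by rw [← hsplit]
        _ = P (G x) + P (x - G x) := map_add _ _ _
        _ = G x + 0 := by rw [hPfix, hPker]
        _ = G x := add_zero _
    constructor
    · rw [hAot, hPG]
    · rw [hAot, hPG]
      ext x
      simp only [comp_apply]
      rw [E1]
      congr 1
      exact E4 (W (A x))
end

section
/- Let W ∈ B(Y,X) be nonzero and let A ∈ B(X,Y) be Wg-Drazin invertible. Then (AW)² ∈ B(Y) is generalized Drazin invertible and A^{⊗,W} = ((AW)²)^ⓓ A W A^{ⓓ,W} W A, where ((AW)²)^ⓓ is the core-EP inverse of (AW)². -/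
open ContinuousLinearMap

variable {X Y : Type*}
  [NormedAddCommGroup X] [InnerProductSpace ℂ X] [CompleteSpace X]
  [NormedAddCommGroup Y] [InnerProductSpace ℂ Y] [CompleteSpace Y]

section MyAnalyticAux
set_option linter.unusedSectionVars false

open Filter Topology ContinuousLinearMap
open scoped ENNReal NNReal

variable {E F : Type*} [NormedAddCommGroup E] [NormedSpace ℂ E] [CompleteSpace E]
  [NormedAddCommGroup F] [NormedSpace ℂ F] [CompleteSpace F]

lemma mySpecRad_zero {u : E →L[ℂ] E} (hu : spectrum ℂ u = {0}) :
    spectralRadius ℂ u = 0 := by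
  rw [spectralRadius, hu]; simp

lemma myEventually {u : E →L[ℂ] E} (hu : spectrum ℂ u = {0}) {ε : ℝ} (hε : 0 < ε) :
    ∀ᶠ n : ℕ in atTop, ‖u ^ n‖ ≤ ε ^ n := by
  have h := spectrum.pow_nnnorm_pow_one_div_tendsto_nhds_spectralRadius u
  rw [mySpecRad_zero hu] at h
  have hε' : (0:ℝ≥0∞) < ENNReal.ofReal ε := by simpa using hε
  have h2 : ∀ᶠ n : ℕ in atTop, (‖u ^ n‖₊ : ℝ≥0∞) ^ (1 / n : ℝ) ≤ ENNReal.ofReal ε :=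
    ENNReal.tendsto_nhds_zero.mp h _ hε'
  filter_upwards [h2, eventually_ge_atTop 1] with n hn hn1
  have hne : ((n:ℝ)) ≠ 0 := by positivity
  have key : (‖u ^ n‖₊ : ℝ≥0∞) ≤ (ENNReal.ofReal ε) ^ n := by
    calc (‖u ^ n‖₊ : ℝ≥0∞) = ((‖u ^ n‖₊ : ℝ≥0∞) ^ (1 / n : ℝ)) ^ (n : ℝ) := by
          rw [← ENNReal.rpow_mul, one_div, inv_mul_cancel₀ hne, ENNReal.rpow_one]
      _ ≤ (ENNReal.ofReal ε) ^ (n : ℝ) := ENNReal.rpow_le_rpow hn (by positivity)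
      _ = (ENNReal.ofReal ε) ^ n := ENNReal.rpow_natCast _ n
  rw [← ENNReal.ofReal_pow hε.le] at key
  rw [← ENNReal.ofReal_le_ofReal_iff (by positivity), ← coe_nnnorm, ENNReal.ofReal_coe_nnreal] at *
  exact key

lemma myTendsto {u : E →L[ℂ] E} (hu : spectrum ℂ u = {0}) {c : ℝ} (hc : 0 ≤ c) :
    Tendsto (fun n : ℕ => c ^ n * ‖u ^ n‖) atTop (𝓝 0) := by
  have hεpos : (0:ℝ) < 1 / (2 * (c + 1)) := by positivity
  have hub : c * (1 / (2 * (c + 1))) ≤ 1 / 2 := by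
    rw [mul_one_div, div_le_div_iff₀ (by positivity) (by norm_num : (0:ℝ) < 2)]
    nlinarith
  refine squeeze_zero' (g := fun n : ℕ => (1/2 : ℝ) ^ n)
    (Filter.Eventually.of_forall fun n => by positivity) ?_ ?_
  · filter_upwards [myEventually hu hεpos] with n hn
    calc c ^ n * ‖u ^ n‖ ≤ c ^ n * (1 / (2 * (c + 1))) ^ n :=
          mul_le_mul_of_nonneg_left hn (by positivity)
      _ = (c * (1 / (2 * (c + 1)))) ^ n := by rw [mul_pow]
      _ ≤ (1/2 : ℝ) ^ n := pow_le_pow_left₀ (by positivity) hub n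
  · exact tendsto_pow_atTop_nhds_zero_of_lt_one (by norm_num) (by norm_num)

lemma myEqZero {u : E →L[ℂ] E} (hu : spectrum ℂ u = {0}) {G : Type*} [NormedAddCommGroup G]
    (x : G) (c : ℝ) (hc : 0 ≤ c) (h : ∀ n : ℕ, ‖x‖ ≤ c ^ (n+1) * ‖u ^ (n+1)‖) : x = 0 := by
  have ht := (myTendsto hu hc).comp (tendsto_add_atTop_nat 1)
  have hx : ‖x‖ ≤ 0 := ge_of_tendsto ht (Filter.Eventually.of_forall fun n => h n)
  exact norm_le_zero_iff.mp hx

lemma myNontrivialCLM [Nontrivial F] : Nontrivial (F →L[ℂ] F) := by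
  refine ⟨1, 0, fun h => ?_⟩
  obtain ⟨x, hx⟩ := exists_ne (0 : F)
  have := congrArg (fun f : F →L[ℂ] F => f x) h
  simp at this
  exact hx this

lemma myQNDominated [Nontrivial E] {u : F →L[ℂ] F} (hu : spectrum ℂ u = {0})
    (s : E →L[ℂ] E) (c r : ℝ) (hc : 0 ≤ c) (hr : 0 ≤ r)
    (h : ∀ n : ℕ, ‖s ^ (n+1)‖ ≤ c * r ^ n * ‖u ^ n‖) : spectrum ℂ s = {0} := by
  have hnt : Nontrivial (E →L[ℂ] E) := myNontrivialCLM
  have hrad : spectralRadius ℂ s = 0 := by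
    refine le_antisymm ?_ zero_le
    have key : ∀ ε : ℝ≥0, 0 < ε → spectralRadius ℂ s ≤ ε := by
      intro ε hε
      have hεr : (0:ℝ) < (ε : ℝ) := hε
      have hδ : (0:ℝ) < (ε : ℝ) / (2 * (r + 1)) := by positivity
      set δ : ℝ := (ε : ℝ) / (2 * (r + 1)) with hδdef
      have h2 : ∀ᶠ n : ℕ in atTop, c * (1/2:ℝ) ^ n ≤ (ε : ℝ) := by
        have : Tendsto (fun n : ℕ => c * (1/2:ℝ) ^ n) atTop (𝓝 (c * 0)) :=
          (tendsto_pow_atTop_nhds_zero_of_lt_one (by norm_num) (by norm_num)).const_mul c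
        rw [mul_zero] at this
        exact this.eventually_le_const hεr
      obtain ⟨n, hn1, hn2⟩ := ((myEventually hu hδ).and h2).exists
      have hrδ : r * δ ≤ (ε : ℝ) / 2 := by
        rw [hδdef, mul_div_assoc']
        rw [div_le_div_iff₀ (by positivity) (by norm_num : (0:ℝ) < 2)]
        nlinarith
      have hb : ‖s ^ (n+1)‖ ≤ (ε : ℝ) ^ (n+1) := by
        calc ‖s ^ (n+1)‖ ≤ c * r ^ n * ‖u ^ n‖ := h n
          _ ≤ c * r ^ n * δ ^ n := by
              refine mul_le_mul_of_nonneg_left hn1 (by positivity)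
          _ = c * (r * δ) ^ n := by rw [mul_pow, mul_assoc]
          _ ≤ c * ((ε:ℝ)/2) ^ n := by
              refine mul_le_mul_of_nonneg_left (pow_le_pow_left₀ (by positivity) hrδ n) hc
          _ = (c * (1/2:ℝ)^n) * (ε:ℝ)^n := by rw [div_eq_mul_inv, mul_pow, one_div]; ring
          _ ≤ (ε:ℝ) * (ε:ℝ)^n := mul_le_mul_of_nonneg_right hn2 (by positivity)
          _ = (ε:ℝ)^(n+1) := by ring
      have hone : ‖(1 : E →L[ℂ] E)‖₊ = 1 := by
        ext; simpa using ContinuousLinearMap.norm_id (𝕜 := ℂ) (E := E)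
      have hle := spectrum.spectralRadius_le_pow_nnnorm_pow_one_div ℂ s n
      rw [hone] at hle
      simp only [ENNReal.coe_one, ENNReal.one_rpow, mul_one] at hle
      refine hle.trans ?_
      have h1 : (‖s ^ (n+1)‖₊ : ℝ≥0∞) ≤ (ENNReal.ofReal ((ε:ℝ))) ^ (n+1) := by
        rw [← ENNReal.ofReal_pow hεr.le, ← ENNReal.ofReal_coe_nnreal, coe_nnnorm]
        exact ENNReal.ofReal_le_ofReal hb
      calc (‖s ^ (n+1)‖₊ : ℝ≥0∞) ^ (1/(n+1) : ℝ)
          ≤ ((ENNReal.ofReal ((ε:ℝ))) ^ (n+1)) ^ (1/(n+1) : ℝ) :=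
            ENNReal.rpow_le_rpow h1 (by positivity)
        _ = ENNReal.ofReal ((ε:ℝ)) := by
            rw [← ENNReal.rpow_natCast (ENNReal.ofReal ((ε:ℝ))) (n+1), ← ENNReal.rpow_mul]
            have hcast : ((n+1 : ℕ) : ℝ) * (1/(n+1) : ℝ) = 1 := by
              push_cast
              field_simp
            rw [hcast, ENNReal.rpow_one]
        _ = (ε : ℝ≥0∞) := ENNReal.ofReal_coe_nnreal
    refine ENNReal.le_of_forall_pos_le_add fun ε hε _ => ?_
    simpa using key ε hε
  ext k
  simp only [Set.mem_singleton_iff]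
  constructor
  · intro hk
    have : (‖k‖₊ : ℝ≥0∞) ≤ spectralRadius ℂ s := le_iSup₂ (f := fun k _ => (‖k‖₊ : ℝ≥0∞)) k hk
    rw [hrad] at this
    simpa using this
  · rintro rfl
    obtain ⟨z, hz⟩ := spectrum.nonempty s
    have : (‖z‖₊ : ℝ≥0∞) ≤ spectralRadius ℂ s := le_iSup₂ (f := fun k _ => (‖k‖₊ : ℝ≥0∞)) z hz
    rw [hrad] at this
    have hz0 : z = 0 := by simpa using this
    rwa [hz0] at hz

lemma myHalf {a b c : E →L[ℂ] E}
    (hab : a * b = b * a) (hbab : b * a * b = b)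
    (hac : a * c = c * a) (hcac : c * a * c = c)
    (huc : spectrum ℂ (a - a * a * c) = {0}) :
    (a * b) * (1 - a * c) = 0 ∧ (1 - a * c) * (a * b) = 0 := by
  set u := a - a * a * c with hu
  have hq : IsIdempotentElem (a * c) := by
    show a * c * (a * c) = a * c
    rw [mul_assoc, ← mul_assoc c a c, hcac]
  have hp : IsIdempotentElem (a * b) := by
    show a * b * (a * b) = a * b
    rw [mul_assoc, ← mul_assoc b a b, hbab]
  have hq' : IsIdempotentElem (1 - a * c) := hq.one_sub
  have cab : Commute a b := hab
  have caq : Commute a (1 - a * c) :=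
    (Commute.one_right a).sub_right ((Commute.refl a).mul_right hac)
  have hua : u = a * (1 - a * c) := by rw [hu, mul_sub, mul_one, ← mul_assoc]
  have hupow : ∀ n : ℕ, u ^ (n+1) = a ^ (n+1) * (1 - a * c) := by
    intro n
    rw [hua, caq.mul_pow, hq'.pow_succ_eq n]
  have hbapow : ∀ n : ℕ, b ^ (n+1) * a ^ (n+1) = a * b := by
    intro n
    rw [← cab.symm.mul_pow, ← hab, hp.pow_succ_eq n]
  have habpow : ∀ n : ℕ, a ^ (n+1) * b ^ (n+1) = a * b := by
    intro n
    rw [← cab.mul_pow, hp.pow_succ_eq n]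
  constructor
  · refine myEqZero huc _ ‖b‖ (norm_nonneg b) fun n => ?_
    have hxe : (a * b) * (1 - a * c) = b ^ (n+1) * u ^ (n+1) := by
      rw [hupow n, ← mul_assoc, hbapow n]
    rw [hxe]
    calc ‖b ^ (n+1) * u ^ (n+1)‖ ≤ ‖b ^ (n+1)‖ * ‖u ^ (n+1)‖ := norm_mul_le _ _
      _ ≤ ‖b‖ ^ (n+1) * ‖u ^ (n+1)‖ :=
          mul_le_mul_of_nonneg_right (norm_pow_le' b n.succ_pos) (norm_nonneg _)
  · refine myEqZero huc _ ‖b‖ (norm_nonneg b) fun n => ?_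
    have hqa : ∀ m : ℕ, (1 - a * c) * a ^ m = a ^ m * (1 - a * c) := fun m =>
      ((caq.symm).pow_right m).eq
    have hxe : (1 - a * c) * (a * b) = u ^ (n+1) * b ^ (n+1) := by
      rw [hupow n, ← habpow n, ← mul_assoc, hqa (n+1)]
    rw [hxe]
    calc ‖u ^ (n+1) * b ^ (n+1)‖ ≤ ‖u ^ (n+1)‖ * ‖b ^ (n+1)‖ := norm_mul_le _ _
      _ ≤ ‖u ^ (n+1)‖ * ‖b‖ ^ (n+1) :=
          mul_le_mul_of_nonneg_left (norm_pow_le' b n.succ_pos) (norm_nonneg _)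
      _ = ‖b‖ ^ (n+1) * ‖u ^ (n+1)‖ := mul_comm _ _

lemma myGDUnique {a b c : E →L[ℂ] E}
    (hab : a * b = b * a) (hbab : b * a * b = b) (hub : spectrum ℂ (a - a * a * b) = {0})
    (hac : a * c = c * a) (hcac : c * a * c = c) (huc : spectrum ℂ (a - a * a * c) = {0}) :
    b = c := by
  obtain ⟨k1, k2⟩ := myHalf hab hbab hac hcac huc
  obtain ⟨k3, k4⟩ := myHalf hac hcac hab hbab hub
  have hpq : a * b = (a * b) * (a * c) := by
    rw [mul_sub, mul_one, sub_eq_zero] at k1; exact k1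
  have hqp : a * b = (a * c) * (a * b) := by
    rw [sub_mul, one_mul, sub_eq_zero] at k2; exact k2
  have hq2 : a * c = (a * c) * (a * b) := by
    rw [mul_sub, mul_one, sub_eq_zero] at k3; exact k3
  have hfin : a * b = a * c := by rw [hqp, ← hq2]
  calc b = b * (a * b) := by rw [← mul_assoc, hbab]
    _ = b * (a * c) := by rw [hfin]
    _ = (b * a) * c := (mul_assoc b a c).symm
    _ = (a * b) * c := by rw [← hab]
    _ = (a * c) * c := by rw [hfin]
    _ = (c * a) * c := by rw [hac]
    _ = c := hcac

lemma myCline [Nontrivial E] (W : F →L[ℂ] E) (A : E →L[ℂ] F) (B : F →L[ℂ] F)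
    (hc1 : (A ∘L W) * B = B * (A ∘L W)) (hc2 : B * (A ∘L W) * B = B)
    (hc3 : spectrum ℂ ((A ∘L W) - (A ∘L W) * (A ∘L W) * B) = {0}) :
    (W ∘L A) * (W ∘L ((B * B) ∘L A)) = (W ∘L ((B * B) ∘L A)) * (W ∘L A) ∧
    (W ∘L ((B * B) ∘L A)) * (W ∘L A) * (W ∘L ((B * B) ∘L A)) = W ∘L ((B * B) ∘L A) ∧
    spectrum ℂ ((W ∘L A) - (W ∘L A) * (W ∘L A) * (W ∘L ((B * B) ∘L A))) = {0} := by
  have e1 : ∀ y, A (W (B y)) = B (A (W y)) := fun y => by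
    simpa only [ContinuousLinearMap.mul_apply, ContinuousLinearMap.comp_apply] using
      DFunLike.congr_fun hc1 y
  have hBBT : B * B * (A ∘L W) = B := by rw [mul_assoc, ← hc1, ← mul_assoc, hc2]
  have e3 : ∀ y, B (B (A (W y))) = B y := fun y => by
    simpa only [ContinuousLinearMap.mul_apply, ContinuousLinearMap.comp_apply] using
      DFunLike.congr_fun hBBT y
  refine ⟨?_, ?_, ?_⟩
  · ext x; simp only [ContinuousLinearMap.mul_apply, ContinuousLinearMap.comp_apply, e1]
  · ext x; simp only [ContinuousLinearMap.mul_apply, ContinuousLinearMap.comp_apply, e1, e3]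
  · set T := A ∘L W with hT
    set N : F →L[ℂ] F := 1 - T * B with hN
    set Q := T - T * T * B with hQ
    have hNT : N * T = Q := by
      rw [hN, sub_mul, one_mul, mul_assoc, ← hc1, ← mul_assoc, hQ]
    have hM : (W ∘L A) - (W ∘L A) * (W ∘L A) * (W ∘L ((B*B) ∘L A)) = W ∘L (N ∘L A) := by
      ext x
      simp only [ContinuousLinearMap.sub_apply, ContinuousLinearMap.mul_apply,
        ContinuousLinearMap.comp_apply, hN, ContinuousLinearMap.one_apply, map_sub, e1, e3, hT]
    rw [hM]
    have hMpow : ∀ n : ℕ, (W ∘L (N ∘L A)) ^ (n+1) = W ∘L ((Q ^ n * N) ∘L A) := by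
      intro n; induction n with
      | zero => simp [pow_zero, one_mul]
      | succ n ih =>
        rw [pow_succ, ih]
        ext x
        have h1 : N (A (W (N (A x)))) = Q (N (A x)) := by
          simpa only [ContinuousLinearMap.mul_apply, ContinuousLinearMap.comp_apply, hT] using
            DFunLike.congr_fun hNT (N (A x))
        simp only [ContinuousLinearMap.mul_apply, ContinuousLinearMap.comp_apply, pow_succ]
        rw [h1]
    refine myQNDominated hc3 _ (‖W‖ * (‖N‖ * ‖A‖)) 1 (by positivity) zero_le_one fun n => ?_
    rw [hMpow n]
    calc ‖W ∘L ((Q ^ n * N) ∘L A)‖ ≤ ‖W‖ * ‖(Q ^ n * N) ∘L A‖ :=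
          ContinuousLinearMap.opNorm_comp_le _ _
      _ ≤ ‖W‖ * (‖Q ^ n * N‖ * ‖A‖) :=
          mul_le_mul_of_nonneg_left (ContinuousLinearMap.opNorm_comp_le _ _) (norm_nonneg W)
      _ ≤ ‖W‖ * ((‖Q ^ n‖ * ‖N‖) * ‖A‖) := by
          have h2 : ‖Q ^ n * N‖ * ‖A‖ ≤ (‖Q ^ n‖ * ‖N‖) * ‖A‖ :=
            mul_le_mul_of_nonneg_right (norm_mul_le (Q ^ n) N) (norm_nonneg A)
          exact mul_le_mul_of_nonneg_left h2 (norm_nonneg W)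
      _ = ‖W‖ * (‖N‖ * ‖A‖) * 1 ^ n * ‖Q ^ n‖ := by ring

end MyAnalyticAux

section MyProjAux
set_option linter.unusedSectionVars false
open ContinuousLinearMap

variable {F : Type*} [NormedAddCommGroup F] [InnerProductSpace ℂ F] [CompleteSpace F]

lemma myProj (K : Submodule ℂ F) (hK : IsClosed (K : Set F)) :
    ∃ P : F →L[ℂ] F, P * P = P ∧ ContinuousLinearMap.adjoint P = P ∧
      LinearMap.range (P : F →ₗ[ℂ] F) = K ∧ ∀ z ∈ K, P z = z := by
  haveI : CompleteSpace K := hK.completeSpace_coe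
  set P : F →L[ℂ] F := K.subtypeL ∘L K.orthogonalProjectionOnto with hP
  have hid : ∀ z ∈ K, P z = z := fun z hz => by
    simp only [hP, ContinuousLinearMap.comp_apply, Submodule.subtypeL_apply]
    exact congrArg Subtype.val (Submodule.orthogonalProjectionOnto_mem_subspace_eq_self ⟨z, hz⟩)
  have hmem : ∀ x, P x ∈ K := fun x => by
    simp only [hP, ContinuousLinearMap.comp_apply, Submodule.subtypeL_apply]
    exact SetLike.coe_mem _
  refine ⟨P, ?_, ?_, ?_, hid⟩
  · ext x; exact hid _ (hmem x)
  · rw [← ContinuousLinearMap.star_eq_adjoint]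
    exact isSelfAdjoint_starProjection K
  · refine le_antisymm ?_ fun z hz => ⟨z, hid z hz⟩
    rintro _ ⟨x, rfl⟩
    exact hmem x

lemma myProjUnique {K : Submodule ℂ F} {P₁ P₂ : F →L[ℂ] F}
    (h₁ : P₁ * P₁ = P₁) (a₁ : ContinuousLinearMap.adjoint P₁ = P₁) (r₁ : LinearMap.range (P₁ : F →ₗ[ℂ] F) = K)
    (h₂ : P₂ * P₂ = P₂) (a₂ : ContinuousLinearMap.adjoint P₂ = P₂) (r₂ : LinearMap.range (P₂ : F →ₗ[ℂ] F) = K) :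
    P₁ = P₂ := by
  have id₁ : ∀ z ∈ K, P₁ z = z := by
    intro z hz; rw [← r₁] at hz; obtain ⟨w, rfl⟩ := hz
    simpa only [ContinuousLinearMap.mul_apply, ContinuousLinearMap.coe_coe] using DFunLike.congr_fun h₁ w
  have id₂ : ∀ z ∈ K, P₂ z = z := by
    intro z hz; rw [← r₂] at hz; obtain ⟨w, rfl⟩ := hz
    simpa only [ContinuousLinearMap.mul_apply, ContinuousLinearMap.coe_coe] using DFunLike.congr_fun h₂ w
  have h12 : P₁ ∘L P₂ = P₂ := by
    ext x; exact id₁ _ (r₂ ▸ ⟨x, rfl⟩)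
  have h21 : P₂ ∘L P₁ = P₁ := by
    ext x; exact id₂ _ (r₁ ▸ ⟨x, rfl⟩)
  have h := congrArg ContinuousLinearMap.adjoint h12
  rw [ContinuousLinearMap.adjoint_comp, a₁, a₂, h21] at h
  exact h

end MyProjAux


theorem stmt11
    (W : Y →L[ℂ] X) (hW : W ≠ 0)
    (A Adw : X →L[ℂ] Y) (hAdw : IsWgDrazinInv W A Adw)
    (WAd : X →L[ℂ] X) (hWAd : IsGDrazinInv (W ∘L A) WAd)
    (AWd : Y →L[ℂ] Y) (hAWd : IsGDrazinInv (A ∘L W) AWd)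
    (Ace : X →L[ℂ] Y) (hAce : IsWCoreEPInv W A WAd AWd Ace)
    (Aot : X →L[ℂ] Y) (hAot : Aot = Ace ∘L W ∘L Ace ∘L W ∘L A) :
    (∃ D C : Y →L[ℂ] Y,
      IsGDrazinInv ((A ∘L W) * (A ∘L W)) D ∧ IsCoreEPInv ((A ∘L W) * (A ∘L W)) D C) ∧
    ∀ D C : Y →L[ℂ] Y,
      IsGDrazinInv ((A ∘L W) * (A ∘L W)) D → IsCoreEPInv ((A ∘L W) * (A ∘L W)) D C →
        Aot = C ∘L A ∘L W ∘L Ace ∘L W ∘L A := by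
  classical
  -- nontriviality
  obtain ⟨y₀, hy₀⟩ : ∃ y, W y ≠ 0 := by
    by_contra h
    push_neg at h
    exact hW (by ext y; simp [h y])
  haveI hntY : Nontrivial Y := ⟨⟨y₀, 0, fun h => hy₀ (by rw [h]; exact map_zero W)⟩⟩
  haveI hntX : Nontrivial X := ⟨⟨W y₀, 0, hy₀⟩⟩
  obtain ⟨hc1, hc2, hc3⟩ := hAWd
  obtain ⟨hg1, hg2, hg3⟩ := hWAd
  have hc3' : spectrum ℂ ((A ∘L W) - (A ∘L W) * (A ∘L W) * AWd) = {0} := hc3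
  have hg3' : spectrum ℂ ((W ∘L A) - (W ∘L A) * (W ∘L A) * WAd) = {0} := hg3
  -- basic algebra in B(Y)
  have hTBB : (A ∘L W) * AWd * AWd = AWd := by rw [hc1, hc2]
  have hBBT : AWd * AWd * (A ∘L W) = AWd := by rw [mul_assoc, ← hc1, ← mul_assoc, hc2]
  have eT : ∀ y, A (W (AWd y)) = AWd (A (W y)) := fun y => by
    simpa only [ContinuousLinearMap.mul_apply, ContinuousLinearMap.comp_apply] using
      DFunLike.congr_fun hc1 y
  have e3 : ∀ y, AWd (AWd (A (W y))) = AWd y := fun y => by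
    simpa only [ContinuousLinearMap.mul_apply, ContinuousLinearMap.comp_apply] using
      DFunLike.congr_fun hBBT y
  have eTBB : ∀ y, A (W (AWd (AWd y))) = AWd y := fun y => by
    simpa only [ContinuousLinearMap.mul_apply, ContinuousLinearMap.comp_apply] using
      DFunLike.congr_fun hTBB y
  -- the subspace K = R(AWd)
  set K := LinearMap.range (AWd : Y →ₗ[ℂ] Y) with hKdef
  have hmemK : ∀ z ∈ K, A (W (AWd z)) = z := by
    rintro _ ⟨w, rfl⟩
    exact eTBB w
  have hKid : ∀ z ∈ K, AWd (A (W z)) = z := by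
    rintro _ ⟨w, rfl⟩
    rw [ContinuousLinearMap.coe_coe, eT w]
    exact e3 w
  have hTK : ∀ z ∈ K, A (W z) ∈ K := by
    rintro _ ⟨w, rfl⟩
    rw [ContinuousLinearMap.coe_coe, eT w]
    exact ⟨A (W w), rfl⟩
  have hKker : K = LinearMap.ker (((1 : Y →L[ℂ] Y) - (A ∘L W) * AWd : Y →L[ℂ] Y) : Y →ₗ[ℂ] Y) := by
    ext z
    simp only [LinearMap.mem_ker, ContinuousLinearMap.coe_coe, ContinuousLinearMap.sub_apply,
      ContinuousLinearMap.one_apply, ContinuousLinearMap.mul_apply,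
      ContinuousLinearMap.comp_apply, sub_eq_zero]
    constructor
    · intro hz
      exact ((hmemK z hz)).symm
    · intro hz
      rw [eT z] at hz
      exact ⟨A (W z), hz.symm⟩
  have hKclosed : IsClosed (K : Set Y) := by
    rw [hKker]
    exact ContinuousLinearMap.isClosed_ker _
  obtain ⟨P, hPP, hPadj, hPrange, hPid⟩ := myProj K hKclosed
  have hrangeBB : LinearMap.range ((AWd * AWd : Y →L[ℂ] Y) : Y →ₗ[ℂ] Y) = K := by
    apply le_antisymm
    · rintro _ ⟨w, rfl⟩
      exact ⟨AWd w, rfl⟩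
    · rintro _ ⟨w, rfl⟩
      exact ⟨A (W w), e3 w⟩
  -- normalization simp lemmas
  have hsw0 : AWd * (A ∘L W) = (A ∘L W) * AWd := hc1.symm
  have hsw : ∀ z : Y →L[ℂ] Y, AWd * ((A ∘L W) * z) = (A ∘L W) * (AWd * z) := fun z => by
    rw [← mul_assoc, hsw0, mul_assoc]
  have hcon0 : (A ∘L W) * (AWd * AWd) = AWd := by rw [← mul_assoc, hTBB]
  have hcon : ∀ z : Y →L[ℂ] Y, (A ∘L W) * (AWd * (AWd * z)) = AWd * z := fun z => by
    rw [← mul_assoc, ← mul_assoc, hTBB]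
  -- D₀ = AWd * AWd is the gDrazin inverse of S = (A∘LW)*(A∘LW)
  have hDcom : ((A ∘L W) * (A ∘L W)) * (AWd * AWd) = (AWd * AWd) * ((A ∘L W) * (A ∘L W)) := by
    simp only [mul_assoc, hsw0, hsw]
  have hDinv : (AWd * AWd) * ((A ∘L W) * (A ∘L W)) * (AWd * AWd) = AWd * AWd := by
    simp only [mul_assoc, hsw0, hsw, hcon0, hcon]
  set Q := (A ∘L W) - (A ∘L W) * (A ∘L W) * AWd with hQdef
  set R := (A ∘L W) + (A ∘L W) * (A ∘L W) * AWd with hRdef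
  have hQR : ((A ∘L W) * (A ∘L W)) -
      ((A ∘L W) * (A ∘L W)) * ((A ∘L W) * (A ∘L W)) * (AWd * AWd) = Q * R := by
    rw [hQdef, hRdef]
    simp only [mul_add, add_mul, mul_sub, sub_mul, mul_assoc, hsw0, hsw]
    abel
  have hQRcomm : Q * R = R * Q := by
    rw [hQdef, hRdef]
    simp only [mul_add, add_mul, mul_sub, sub_mul, mul_assoc, hsw0, hsw]
    abel
  have hDqn : spectrum ℂ (((A ∘L W) * (A ∘L W)) -
      ((A ∘L W) * (A ∘L W)) * ((A ∘L W) * (A ∘L W)) * (AWd * AWd)) = {0} := by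
    rw [hQR]
    refine myQNDominated hc3' _ (‖Q‖ * ‖R‖) ‖R‖ (by positivity) (norm_nonneg R) fun n => ?_
    have hcm : Commute Q R := hQRcomm
    calc ‖(Q * R) ^ (n+1)‖ = ‖Q ^ (n+1) * R ^ (n+1)‖ := by rw [hcm.mul_pow]
      _ ≤ ‖Q ^ (n+1)‖ * ‖R ^ (n+1)‖ := norm_mul_le _ _
      _ ≤ (‖Q‖ * ‖Q ^ n‖) * (‖R‖ * ‖R‖ ^ n) := by
          refine mul_le_mul ?_ ?_ (norm_nonneg _) (by positivity)
          · rw [pow_succ']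
            exact norm_mul_le _ _
          · calc ‖R ^ (n+1)‖ ≤ ‖R‖ ^ (n+1) := norm_pow_le' R n.succ_pos
              _ = ‖R‖ * ‖R‖ ^ n := by rw [pow_succ']
      _ = ‖Q‖ * ‖R‖ * ‖R‖ ^ n * ‖Q ^ n‖ := by ring
  -- C₀
  set C₀ := AWd * AWd * P with hC₀def
  have hSBB : ((A ∘L W) * (A ∘L W)) * (AWd * AWd) = (A ∘L W) * AWd := by
    simp only [mul_assoc, hcon0]
  have hSC₀ : ((A ∘L W) * (A ∘L W)) * C₀ = P := by
    rw [hC₀def, ← mul_assoc, hSBB]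
    ext y
    have hPy : P y ∈ K := by rw [← hPrange]; exact ⟨y, rfl⟩
    simp only [ContinuousLinearMap.mul_apply, ContinuousLinearMap.comp_apply]
    exact hmemK _ hPy
  have hCoreEP₀ : IsCoreEPInv ((A ∘L W) * (A ∘L W)) (AWd * AWd) C₀ := by
    constructor
    · rw [hrangeBB, hSC₀]
      exact ⟨hPP, hPadj, hPrange⟩
    · rw [hrangeBB]
      rintro _ ⟨x, rfl⟩
      exact ⟨AWd (P x), rfl⟩
  refine ⟨⟨AWd * AWd, C₀, ⟨hDcom, hDinv, hDqn⟩, hCoreEP₀⟩, ?_⟩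
  -- Cline and intertwining relations
  obtain ⟨cl1, cl2, cl3⟩ := myCline W A AWd hc1 hc2 hc3'
  have hgeq : WAd = W ∘L ((AWd * AWd) ∘L A) := myGDUnique hg1 hg2 hg3' cl1 cl2 cl3
  obtain ⟨⟨hPiPi, hPiAdj, hPiRange⟩, hAceR⟩ := hAce
  have hAceK : ∀ v, Ace v ∈ K := fun v => hAceR ⟨v, rfl⟩
  have iW : ∀ y, WAd (W y) = W (AWd y) := fun y => by
    rw [hgeq]
    simp only [ContinuousLinearMap.comp_apply, ContinuousLinearMap.mul_apply]
    rw [e3 y]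
  have iA : ∀ x, A (WAd x) = AWd (A x) := fun x => by
    rw [hgeq]
    simp only [ContinuousLinearMap.comp_apply, ContinuousLinearMap.mul_apply, eT, e3]
  have hggG : WAd * WAd * (W ∘L A) = WAd := by rw [mul_assoc, ← hg1, ← mul_assoc, hg2]
  have eg : ∀ x, WAd (WAd (W (A x))) = WAd x := fun x => by
    simpa only [ContinuousLinearMap.mul_apply, ContinuousLinearMap.comp_apply] using
      DFunLike.congr_fun hggG x
  have hPiId : ∀ z ∈ LinearMap.range (WAd : X →ₗ[ℂ] X), (W ∘L A ∘L W ∘L Ace) z = z := by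
    intro z hz
    rw [← hPiRange] at hz
    obtain ⟨w, rfl⟩ := hz
    simpa only [ContinuousLinearMap.mul_apply, ContinuousLinearMap.coe_coe] using DFunLike.congr_fun hPiPi w
  have step4 : ∀ v, A (WAd (W (Ace v))) = Ace v := fun v => by
    rw [iW]
    exact hmemK _ (hAceK v)
  have hWAceR : ∀ v, W (Ace v) ∈ LinearMap.range (WAd : X →ₗ[ℂ] X) := fun v => by
    have h1 : AWd (A (W (Ace v))) = Ace v := hKid _ (hAceK v)
    exact ⟨W (A (W (Ace v))), by rw [ContinuousLinearMap.coe_coe, iW, h1]⟩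
  have main : ∀ v, Ace (W (Ace v)) = AWd (Ace v) := fun v => by
    have s6 : ∀ t, A (WAd (WAd ((W ∘L A ∘L W ∘L Ace) t))) = Ace t := fun t => by
      simp only [ContinuousLinearMap.comp_apply]
      rw [eg (W (Ace t))]
      exact step4 t
    have h1 := s6 (W (Ace v))
    rw [hPiId _ (hWAceR v)] at h1
    rw [← h1, iA, step4]
  -- the universal part
  intro D C hD hCEP
  have hDeq : D = AWd * AWd := myGDUnique hD.1 hD.2.1 hD.2.2 hDcom hDinv hDqn
  obtain ⟨hOP, hCrange⟩ := hCEP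
  rw [hDeq, hrangeBB] at hOP hCrange
  obtain ⟨hOP1, hOP2, hOP3⟩ := hOP
  have hPC : ((A ∘L W) * (A ∘L W)) * C = P :=
    myProjUnique hOP1 hOP2 hOP3 hPP hPadj hPrange
  have hinj : ∀ z ∈ K, A (W (A (W z))) = 0 → z = 0 := by
    intro z hz h0
    have h1 : z = AWd (A (W z)) := (hKid z hz).symm
    have h2 := hKid _ (hTK z hz)
    rw [h0] at h2
    rw [map_zero] at h2
    rw [h1, ← h2, map_zero]
  have hCC₀ : C = C₀ := by
    ext x
    have hx1 : C x ∈ K := hCrange ⟨x, rfl⟩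
    have hx2 : C₀ x ∈ K := by
      rw [← hrangeBB]
      exact ⟨P x, rfl⟩
    have hz : A (W (A (W (C x - C₀ x)))) = 0 := by
      have q1 := DFunLike.congr_fun hPC x
      have q2 := DFunLike.congr_fun hSC₀ x
      simp only [ContinuousLinearMap.mul_apply, ContinuousLinearMap.comp_apply] at q1 q2
      simp only [map_sub, q1, q2, sub_self]
    have := hinj _ (K.sub_mem hx1 hx2) hz
    exact sub_eq_zero.mp this
  rw [hAot, hCC₀, hC₀def]
  ext x
  simp only [ContinuousLinearMap.comp_apply, ContinuousLinearMap.mul_apply]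
  have hz : Ace (W (A x)) ∈ K := hAceK _
  have hTz : A (W (Ace (W (A x)))) ∈ K := hTK _ hz
  rw [hPid _ hTz, main, e3]
end
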